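/- arXiv:math/0211148 — 7 statements merged into one kernel-verified Lean document; each statement's English description precedes it below -/
import Mathlib

section
/- The alternating series ∑_{n=1}^∞ (−1)^{n−1} (1/n − ln((n+1)/n)) converges to ln(4/π). -/
/-!
The terms `1/(n+1) - log((n+2)/(n+1))` are nonnegative with partial sums `H_m - log(m+1) → γ`, so
the alternating series converges absolutely and its sum is the limit of its partial sums of even
length. Pairing the terms `2i` and `2i+1`, the partial sum of length `2k` is `H_{2k} - H_k`, which
tends to `log 2`, minus the logarithm of the `k`-th Wallis product, which tends to `log (π/2)`.
-/

open Filter Finset Real Topology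

theorem Summable.hasSum_of_tendsto_sum_range_comp {α : Type*} [AddCommMonoid α]
    [TopologicalSpace α] [T2Space α] {f : ℕ → α} {φ : ℕ → ℕ} {a : α} (hf : Summable f)
    (hφ : Tendsto φ atTop atTop) (h : Tendsto (fun k ↦ ∑ n ∈ range (φ k), f n) atTop (𝓝 a)) :
    HasSum f a :=
  tendsto_nhds_unique (hf.hasSum.tendsto_sum_nat.comp hφ) h ▸ hf.hasSum

theorem Finset.sum_range_two_mul_neg_one_pow_mul {R : Type*} [CommRing R] (a : ℕ → R) (k : ℕ) :
    ∑ n ∈ range (2 * k), (-1) ^ n * a n = ∑ i ∈ range k, (a (2 * i) - a (2 * i + 1)) := by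
  induction k with
  | zero => simp
  | succ k ih =>
    rw [Nat.mul_succ, sum_range_succ, sum_range_succ, sum_range_succ, ih, pow_succ, pow_mul]
    simp only [neg_one_sq, one_pow]
    ring

theorem Real.log_add_two_div_add_one_le {x : ℝ} (hx : 0 < x + 1) :
    log ((x + 2) / (x + 1)) ≤ 1 / (x + 1) := by
  have h := log_le_sub_one_of_pos (div_pos (by linarith) hx : 0 < (x + 2) / (x + 1))
  rwa [show (x + 2) / (x + 1) - 1 = 1 / (x + 1) by field_simp; ring] at h

theorem sum_range_inv_odd_sub_inv_even (k : ℕ) :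
    ∑ i ∈ range k, (1 / (2 * i + 1 : ℝ) - 1 / (2 * i + 2)) = harmonic (2 * k) - harmonic k := by
  induction k with
  | zero => simp
  | succ k ih =>
    rw [sum_range_succ, ih, Nat.mul_succ, harmonic_succ, harmonic_succ, harmonic_succ]
    push_cast
    field_simp
    ring

theorem tendsto_sum_range_inv_odd_sub_inv_even :
    Tendsto (fun k : ℕ ↦ ∑ i ∈ range k, (1 / (2 * i + 1 : ℝ) - 1 / (2 * i + 2))) atTop
      (𝓝 (log 2)) := by
  have h2k : Tendsto (fun k : ℕ ↦ 2 * k) atTop atTop := tendsto_id.const_mul_atTop' two_pos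
  have := ((tendsto_harmonic_sub_log.comp h2k).sub tendsto_harmonic_sub_log).const_add (log 2)
  rw [sub_self, add_zero] at this
  refine this.congr' ?_
  filter_upwards [eventually_ne_atTop 0] with k hk
  simp only [Function.comp_apply, sum_range_inv_odd_sub_inv_even, Nat.cast_mul, Nat.cast_ofNat]
  rw [log_mul two_ne_zero (by positivity)]
  ring

theorem tendsto_sum_range_log_wallis_factor :
    Tendsto (fun k : ℕ ↦ ∑ i ∈ range k,
      log ((2 * i + 2 : ℝ) / (2 * i + 1) * ((2 * i + 2) / (2 * i + 3)))) atTop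
      (𝓝 (log (π / 2))) := by
  refine ((continuousAt_log (by positivity)).tendsto.comp tendsto_prod_pi_div_two).congr fun k ↦ ?_
  exact log_prod fun i _ ↦ by positivity

noncomputable def eulerMascheroniTerm (n : ℕ) : ℝ := 1 / (n + 1 : ℝ) - log ((n + 2) / (n + 1))

theorem eulerMascheroniTerm_nonneg (n : ℕ) : 0 ≤ eulerMascheroniTerm n :=
  sub_nonneg.2 (log_add_two_div_add_one_le (by positivity))

theorem sum_range_eulerMascheroniTerm (m : ℕ) :
    ∑ n ∈ range m, eulerMascheroniTerm n = eulerMascheroniSeq m := by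
  induction m with
  | zero => simp [eulerMascheroniSeq]
  | succ m ih =>
    rw [sum_range_succ, ih, eulerMascheroniSeq, eulerMascheroniSeq, eulerMascheroniTerm,
      harmonic_succ, log_div (by positivity) (by positivity)]
    push_cast
    rw [add_assoc _ 1 1, one_add_one_eq_two]
    ring

theorem hasSum_eulerMascheroniTerm : HasSum eulerMascheroniTerm eulerMascheroniConstant := by
  rw [hasSum_iff_tendsto_nat_of_nonneg eulerMascheroniTerm_nonneg]
  simpa only [sum_range_eulerMascheroniTerm] using tendsto_eulerMascheroniSeq

theorem eulerMascheroniTerm_even_sub_odd (i : ℕ) :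
    eulerMascheroniTerm (2 * i) - eulerMascheroniTerm (2 * i + 1) =
      (1 / (2 * i + 1 : ℝ) - 1 / (2 * i + 2)) -
        log ((2 * i + 2 : ℝ) / (2 * i + 1) * ((2 * i + 2) / (2 * i + 3))) := by
  simp only [eulerMascheroniTerm]
  push_cast
  rw [show (2 * i + 1 + 1 : ℝ) = 2 * i + 2 by ring, show (2 * i + 1 + 2 : ℝ) = 2 * i + 3 by ring,
    log_mul (by positivity) (by positivity), ← inv_div (2 * i + 3 : ℝ), log_inv]
  ring

theorem alternating_euler_series_eq_log_four_div_pi :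
    HasSum (fun n : ℕ => (-1 : ℝ) ^ n * (1 / (n + 1 : ℝ) - Real.log ((n + 2) / (n + 1))))
      (Real.log (4 / Real.pi)) := by
  change HasSum (fun n ↦ (-1) ^ n * eulerMascheroniTerm n) _
  have hsummable : Summable (fun n ↦ (-1 : ℝ) ^ n * eulerMascheroniTerm n) :=
    hasSum_eulerMascheroniTerm.summable.of_norm_bounded fun n ↦ by
      simp [abs_of_nonneg (eulerMascheroniTerm_nonneg n)]
  refine hsummable.hasSum_of_tendsto_sum_range_comp (tendsto_id.const_mul_atTop' two_pos) ?_
  have hlog : log (4 / π) = log 2 - log (π / 2) := by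
    rw [← log_div two_ne_zero (by positivity)]
    congr 1
    field_simp
    norm_num
  rw [hlog]
  refine (tendsto_sum_range_inv_odd_sub_inv_even.sub tendsto_sum_range_log_wallis_factor).congr
    fun k ↦ ?_
  rw [id, sum_range_two_mul_neg_one_pow_mul, ← sum_sub_distrib]
  exact sum_congr rfl fun i _ ↦ (eulerMascheroniTerm_even_sub_odd i).symm
end

section
/- The double integral ∬_{[0,1]²} (1−x)/((1−xy)(−ln(xy))) dx dy equals the Euler–Mascheroni constant γ. -/
/-!
Substituting `u = x * y`, the inner integral is `(x⁻¹ - 1) * F x` with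
`F x = ∫ u in 0..x, ((1 - u) * -log u)⁻¹`. Since `log x - x + 1` is a primitive of `x⁻¹ - 1`
vanishing at `1`, and `F x * (log x - x + 1)` tends to `0` at both ends of `[0, 1]`, integration
by parts turns the double integral into the classical `∫₀¹ (1 / (1 - x) + 1 / log x) dx`.
Writing this integrand `h` as `(1 - x ^ N) * h x + x ^ N * h x`, the first part integrates to
`∑_{k<N} ∫₀¹ x ^ k - ∫₀¹ (1 - x ^ N) / -log x = harmonic N - log (N + 1)` (the logarithmic one
via `(1 - x ^ N) / -log x = ∫₀ᴺ x ^ s ds` and Fubini) and the remainder to at most `1 / (N + 1)`,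
because `0 ≤ h ≤ 1`; letting `N → ∞` gives `γ`.
-/

open Real MeasureTheory Set Filter Topology intervalIntegral

theorem integrableOn_Ioo_of_continuousOn_of_norm_le {E : Type*} [NormedAddCommGroup E]
    {f : ℝ → E} {a b C : ℝ} (hf : ContinuousOn f (Ioo a b)) (hC : ∀ x ∈ Ioo a b, ‖f x‖ ≤ C) :
    IntegrableOn f (Ioo a b) :=
  ⟨hf.aestronglyMeasurable measurableSet_Ioo,
    .restrict_of_bounded (C := C) measure_Ioo_lt_top ((ae_restrict_mem measurableSet_Ioo).mono hC)⟩

theorem integral_const_rpow {x : ℝ} (hx0 : 0 < x) (hx1 : x ≠ 1) (a b : ℝ) :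
    ∫ s in a..b, x ^ s = (x ^ b - x ^ a) / log x := by
  have hlog : log x ≠ 0 := log_ne_zero_of_pos_of_ne_one hx0 hx1
  rw [integral_eq_sub_of_hasDerivAt (f := fun s => x ^ s / log x)
    (fun s _ => ((hasStrictDerivAt_const_rpow hx0 s).hasDerivAt.div_const _).congr_deriv
      (mul_div_cancel_right₀ _ hlog))
    (continuous_const_rpow hx0.ne' |>.intervalIntegrable _ _)]
  ring

theorem integral_Ioc_const_rpow {x : ℝ} (hx0 : 0 < x) (hx1 : x < 1) {t : ℝ} (ht : 0 ≤ t) :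
    ∫ s in Ioc 0 t, x ^ s = (1 - x ^ t) / -log x := by
  rw [← integral_of_le ht, integral_const_rpow hx0 hx1.ne, rpow_zero]
  ring

theorem integrable_rpow_restrict_prod (t : ℝ) :
    Integrable (Function.uncurry fun x s : ℝ => x ^ s)
      ((volume.restrict (Ioo 0 1)).prod (volume.restrict (Ioc 0 t))) := by
  refine Integrable.of_bound (measurable_fst.pow measurable_snd).aestronglyMeasurable 1 ?_
  rw [Measure.prod_restrict]
  filter_upwards [ae_restrict_mem (measurableSet_Ioo.prod measurableSet_Ioc)] with p ⟨hx, hs⟩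
  rw [Function.uncurry_apply_pair, norm_of_nonneg (rpow_nonneg hx.1.le _)]
  exact rpow_le_one hx.1.le hx.2.le hs.1.le

theorem integrableOn_one_sub_rpow_div_neg_log {t : ℝ} (ht : 0 ≤ t) :
    IntegrableOn (fun x => (1 - x ^ t) / -log x) (Ioo 0 1) :=
  (integrable_rpow_restrict_prod t).integral_prod_left.congr <|
    (ae_restrict_mem measurableSet_Ioo).mono fun _ hx => integral_Ioc_const_rpow hx.1 hx.2 ht

theorem integral_one_sub_rpow_div_neg_log {t : ℝ} (ht : 0 ≤ t) :
    ∫ x in Ioo 0 1, (1 - x ^ t) / -log x = log (t + 1) := by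
  have h_inner : ∀ s ∈ Ioc (0 : ℝ) t, ∫ x in Ioo 0 1, x ^ s = (s + 1)⁻¹ := fun s hs => by
    rw [← integral_Ioc_eq_integral_Ioo, ← integral_of_le zero_le_one,
      integral_rpow (Or.inl (by linarith [hs.1])), one_rpow, zero_rpow (by linarith [hs.1])]
    ring
  rw [← setIntegral_congr_fun measurableSet_Ioo fun x hx => integral_Ioc_const_rpow hx.1 hx.2 ht,
    integral_integral_swap (integrable_rpow_restrict_prod t),
    setIntegral_congr_fun measurableSet_Ioc h_inner, ← integral_of_le ht,
    integral_comp_add_right (fun s => s⁻¹), zero_add,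
    integral_inv_of_pos one_pos (by linarith), div_one]

theorem one_sub_pow_div_one_sub_eqOn_geom_sum (N : ℕ) :
    EqOn (fun x : ℝ => (1 - x ^ N) / (1 - x)) (fun x => ∑ i ∈ Finset.range N, x ^ i) (Ioo 0 1) :=
  fun x hx => by simp only; rw [geom_sum_eq hx.2.ne, ← neg_div_neg_eq, neg_sub, neg_sub]

theorem integrableOn_one_sub_pow_div_one_sub (N : ℕ) :
    IntegrableOn (fun x : ℝ => (1 - x ^ N) / (1 - x)) (Ioo 0 1) :=
  ((continuous_finsetSum _ fun i _ => continuous_pow i).integrableOn_Icc.mono_set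
    Ioo_subset_Icc_self).congr_fun (one_sub_pow_div_one_sub_eqOn_geom_sum N).symm measurableSet_Ioo

theorem integral_one_sub_pow_div_one_sub (N : ℕ) :
    ∫ x in Ioo (0 : ℝ) 1, (1 - x ^ N) / (1 - x) = harmonic N := by
  have hpow : ∀ i : ℕ, ∫ x in Ioo (0 : ℝ) 1, x ^ i = (i + 1 : ℝ)⁻¹ := fun i => by
    rw [← integral_Ioc_eq_integral_Ioo, ← integral_of_le zero_le_one, integral_pow]
    simp
  rw [setIntegral_congr_fun measurableSet_Ioo (one_sub_pow_div_one_sub_eqOn_geom_sum N),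
    integral_finsetSum _ fun i _ =>
      (continuous_pow i).integrableOn_Icc.mono_set Ioo_subset_Icc_self]
  simp [harmonic, hpow]

noncomputable def eulerIntegrand (x : ℝ) : ℝ := 1 / (1 - x) + 1 / log x

theorem eulerIntegrand_nonneg {x : ℝ} (hx0 : 0 < x) (hx1 : x < 1) : 0 ≤ eulerIntegrand x := by
  have h1 : 0 < 1 - x := by linarith
  have hlog : 1 - x ≤ -log x := by linarith [log_le_sub_one_of_pos hx0]
  have := one_div_le_one_div_of_le h1 hlog
  rw [eulerIntegrand, ← neg_neg (log x), one_div_neg_eq_neg_one_div]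
  linarith

theorem eulerIntegrand_le_one {x : ℝ} (hx0 : 0 < x) (hx1 : x < 1) : eulerIntegrand x ≤ 1 := by
  have h1 : 0 < 1 - x := by linarith
  have hlog : 0 < -log x := neg_pos.2 (log_neg hx0 hx1)
  have key : x * -log x ≤ 1 - x := by
    have := one_sub_inv_le_log_of_pos hx0
    rw [← sub_nonneg] at this ⊢
    nlinarith [mul_inv_cancel₀ hx0.ne']
  rw [eulerIntegrand, ← neg_neg (log x), one_div_neg_eq_neg_one_div, ← sub_eq_add_neg,
    div_sub_div _ _ h1.ne' hlog.ne', div_le_one (by positivity)]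
  nlinarith

theorem continuousOn_eulerIntegrand : ContinuousOn eulerIntegrand (Ioo 0 1) := fun _ hx =>
  ((continuousAt_const.div (continuousAt_const.sub continuousAt_id) (sub_pos.2 hx.2).ne').add
    (continuousAt_const.div (continuousAt_log hx.1.ne') (log_neg hx.1 hx.2).ne)).continuousWithinAt

theorem integrableOn_pow_mul_eulerIntegrand (N : ℕ) :
    IntegrableOn (fun x => x ^ N * eulerIntegrand x) (Ioo 0 1) :=
  integrableOn_Ioo_of_continuousOn_of_norm_le (C := 1)
    ((continuous_pow N).continuousOn.mul continuousOn_eulerIntegrand) fun x hx => by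
      rw [norm_of_nonneg (mul_nonneg (pow_nonneg hx.1.le N) (eulerIntegrand_nonneg hx.1 hx.2))]
      exact mul_le_one₀ (pow_le_one₀ hx.1.le hx.2.le) (eulerIntegrand_nonneg hx.1 hx.2)
        (eulerIntegrand_le_one hx.1 hx.2)

theorem tendsto_setIntegral_pow_mul_eulerIntegrand :
    Tendsto (fun N : ℕ => ∫ x in Ioo 0 1, x ^ N * eulerIntegrand x) atTop (𝓝 0) := by
  refine squeeze_zero (fun N => setIntegral_nonneg measurableSet_Ioo fun x hx =>
    mul_nonneg (pow_nonneg hx.1.le N) (eulerIntegrand_nonneg hx.1 hx.2))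
    (fun N => ?_) tendsto_one_div_add_atTop_nhds_zero_nat
  calc ∫ x in Ioo 0 1, x ^ N * eulerIntegrand x
      ≤ ∫ x in Ioo 0 1, x ^ N :=
        setIntegral_mono_on (integrableOn_pow_mul_eulerIntegrand N)
          ((continuous_pow N).integrableOn_Icc.mono_set Ioo_subset_Icc_self) measurableSet_Ioo
          fun x hx =>
            mul_le_of_le_one_right (pow_nonneg hx.1.le N) (eulerIntegrand_le_one hx.1 hx.2)
    _ = 1 / (N + 1) := by
        rw [← integral_Ioc_eq_integral_Ioo, ← integral_of_le zero_le_one, integral_pow]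
        simp

theorem setIntegral_eulerIntegrand_eq_harmonic_sub_log_add (N : ℕ) :
    ∫ x in Ioo 0 1, eulerIntegrand x
      = harmonic N - log (N + 1) + ∫ x in Ioo 0 1, x ^ N * eulerIntegrand x := by
  have hlog := integral_one_sub_rpow_div_neg_log (Nat.cast_nonneg N)
  have hlogInt := integrableOn_one_sub_rpow_div_neg_log (Nat.cast_nonneg N)
  simp only [rpow_natCast] at hlog hlogInt
  have hInt : IntegrableOn (fun x : ℝ => (1 - x ^ N) / (1 - x) - (1 - x ^ N) / -log x) (Ioo 0 1) :=
    (integrableOn_one_sub_pow_div_one_sub N).sub hlogInt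
  rw [← integral_one_sub_pow_div_one_sub N, ← hlog,
    ← integral_sub (integrableOn_one_sub_pow_div_one_sub N) hlogInt,
    ← integral_add hInt (integrableOn_pow_mul_eulerIntegrand N)]
  congr 1
  ext x
  simp only [eulerIntegrand]
  ring

theorem integral_eulerIntegrand :
    ∫ x in (0 : ℝ)..1, eulerIntegrand x = eulerMascheroniConstant := by
  rw [integral_of_le zero_le_one, integral_Ioc_eq_integral_Ioo]
  refine tendsto_nhds_unique ?_ tendsto_harmonic_sub_log_add_one
  have h := tendsto_setIntegral_pow_mul_eulerIntegrand.const_sub (∫ x in Ioo 0 1, eulerIntegrand x)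
  rw [sub_zero] at h
  exact h.congr fun N => by rw [setIntegral_eulerIntegrand_eq_harmonic_sub_log_add N]; ring

noncomputable def logKernel (u : ℝ) : ℝ := ((1 - u) * -log u)⁻¹

noncomputable def logKernelPrimitive (x : ℝ) : ℝ := ∫ u in 0..x, logKernel u

theorem measurable_logKernel : Measurable logKernel :=
  ((measurable_const.sub measurable_id).mul measurable_log.neg).inv

theorem logKernel_nonneg {u : ℝ} (hu0 : 0 ≤ u) (hu1 : u ≤ 1) : 0 ≤ logKernel u :=
  inv_nonneg.2 (mul_nonneg (sub_nonneg.2 hu1) (neg_nonneg.2 (log_nonpos hu0 hu1)))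

theorem logKernel_le {u : ℝ} (hu0 : 0 < u) (hu1 : u < 1) : logKernel u ≤ ((1 - u) ^ 2)⁻¹ := by
  have h1 : 0 < 1 - u := by linarith
  have hlog : 1 - u ≤ -log u := by linarith [log_le_sub_one_of_pos hu0]
  exact inv_anti₀ (by positivity) (by rw [sq]; exact mul_le_mul_of_nonneg_left hlog h1.le)

theorem continuousAt_logKernel {u : ℝ} (hu0 : 0 < u) (hu1 : u < 1) : ContinuousAt logKernel u :=
  ((continuousAt_const.sub continuousAt_id).mul (continuousAt_log hu0.ne').neg).inv₀
    (mul_ne_zero (sub_pos.2 hu1).ne' (neg_pos.2 (log_neg hu0 hu1)).ne')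

theorem hasDerivAt_inv_one_sub {u : ℝ} (hu : u ≠ 1) :
    HasDerivAt (fun u => (1 - u)⁻¹) ((1 - u) ^ 2)⁻¹ u := by
  simpa using ((hasDerivAt_id u).const_sub 1).fun_inv (sub_ne_zero.2 hu.symm)

theorem intervalIntegrable_inv_one_sub_sq {b : ℝ} (hb : b < 1) :
    IntervalIntegrable (fun u => ((1 - u) ^ 2)⁻¹) volume 0 b :=
  ContinuousOn.intervalIntegrable fun _ hu =>
    ((continuousAt_const.sub continuousAt_id).pow 2 |>.inv₀ <| pow_ne_zero 2 <|
      sub_ne_zero.2 (hu.2.trans_lt (max_lt one_pos hb)).ne').continuousWithinAt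

theorem intervalIntegrable_logKernel {b : ℝ} (hb0 : 0 ≤ b) (hb1 : b < 1) :
    IntervalIntegrable logKernel volume 0 b := by
  refine (intervalIntegrable_inv_one_sub_sq hb1).mono_fun
    measurable_logKernel.aestronglyMeasurable
    ((ae_restrict_mem measurableSet_uIoc).mono fun u hu => ?_)
  rw [uIoc_of_le hb0] at hu
  have hu1 : u < 1 := hu.2.trans_lt hb1
  dsimp only
  rw [norm_of_nonneg (logKernel_nonneg hu.1.le hu1.le), norm_of_nonneg (by positivity)]
  exact logKernel_le hu.1 hu1

theorem logKernelPrimitive_nonneg {x : ℝ} (hx0 : 0 ≤ x) (hx1 : x ≤ 1) : 0 ≤ logKernelPrimitive x :=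
  integral_nonneg hx0 fun _ hu => logKernel_nonneg hu.1 (hu.2.trans hx1)

theorem logKernelPrimitive_le {x : ℝ} (hx0 : 0 ≤ x) (hx1 : x < 1) :
    logKernelPrimitive x ≤ x / (1 - x) := by
  have hprim : ∫ u in 0..x, ((1 - u) ^ 2)⁻¹ = x / (1 - x) := by
    rw [integral_eq_sub_of_hasDerivAt (fun u hu => hasDerivAt_inv_one_sub ?_)
      (intervalIntegrable_inv_one_sub_sq hx1)]
    · field_simp [(sub_pos.2 hx1).ne']
      ring
    · rw [uIcc_of_le hx0] at hu
      exact (hu.2.trans_lt hx1).ne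
  rw [← hprim]
  refine integral_mono_on_of_le_Ioo hx0 (intervalIntegrable_logKernel hx0 hx1)
    (intervalIntegrable_inv_one_sub_sq hx1) fun _ hu => logKernel_le hu.1 (hu.2.trans hx1)

theorem hasDerivAt_logKernelPrimitive {x : ℝ} (hx0 : 0 < x) (hx1 : x < 1) :
    HasDerivAt logKernelPrimitive (logKernel x) x :=
  integral_hasDerivAt_right (intervalIntegrable_logKernel hx0.le hx1)
    measurable_logKernel.stronglyMeasurable.stronglyMeasurableAtFilter
    (continuousAt_logKernel hx0 hx1)

theorem integral_one_sub_div_mul_neg_log_mul (x : ℝ) :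
    ∫ y in 0..1, (1 - x) / ((1 - x * y) * -log (x * y)) = (x⁻¹ - 1) * logKernelPrimitive x := by
  rcases eq_or_ne x 0 with rfl | hx
  · simp [logKernelPrimitive]
  simp_rw [div_eq_mul_inv (1 - x)]
  rw [intervalIntegral.integral_const_mul,
    integral_comp_mul_left (fun u => ((1 - u) * -log u)⁻¹) hx, mul_zero, mul_one, smul_eq_mul, ← mul_assoc]
  congr 1
  field_simp

theorem abs_logKernelPrimitive_mul_le {x : ℝ} (hx0 : 0 < x) (hx1 : x < 1) :
    |logKernelPrimitive x * (log x - x + 1)| ≤ x / (1 - x) * (x - 1 - log x) := by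
  have hF := logKernelPrimitive_nonneg hx0.le hx1.le
  have hH : log x - x + 1 ≤ 0 := by linarith [log_le_sub_one_of_pos hx0]
  calc |logKernelPrimitive x * (log x - x + 1)| = logKernelPrimitive x * (x - 1 - log x) := by
        rw [abs_of_nonpos (mul_nonpos_of_nonneg_of_nonpos hF hH)]; ring
    _ ≤ x / (1 - x) * (x - 1 - log x) :=
        mul_le_mul_of_nonneg_right (logKernelPrimitive_le hx0.le hx1) (by linarith)

theorem hasDerivAt_logKernelPrimitive_mul {x : ℝ} (hx0 : 0 < x) (hx1 : x < 1) :
    HasDerivAt (fun x => logKernelPrimitive x * (log x - x + 1))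
      ((x⁻¹ - 1) * logKernelPrimitive x - eulerIntegrand x) x := by
  refine ((hasDerivAt_logKernelPrimitive hx0 hx1).mul
    (((hasDerivAt_log hx0.ne').sub (hasDerivAt_id x)).add_const 1)).congr_deriv ?_
  have h1 : 1 - x ≠ 0 := (sub_pos.2 hx1).ne'
  have hlog : log x ≠ 0 := (log_neg hx0 hx1).ne
  simp only [logKernel, eulerIntegrand, Pi.sub_apply, id]
  field_simp
  ring

theorem tendsto_logKernelPrimitive_mul_nhdsGT_zero :
    Tendsto (fun x => logKernelPrimitive x * (log x - x + 1)) (𝓝[>] 0) (𝓝 0) := by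
  have hbound : ContinuousAt (fun x => (x * (x - 1) - x * log x) / (1 - x)) 0 :=
    ((continuousAt_id.mul (continuousAt_id.sub continuousAt_const)).sub
      continuous_mul_log.continuousAt).div (continuousAt_const.sub continuousAt_id) (by norm_num)
  refine squeeze_zero_norm' ?_ (by simpa using hbound.tendsto.mono_left nhdsWithin_le_nhds)
  filter_upwards [Ioo_mem_nhdsGT one_pos] with x hx
  exact (abs_logKernelPrimitive_mul_le hx.1 hx.2).trans_eq (by ring)

theorem tendsto_logKernelPrimitive_mul_nhdsLT_one :
    Tendsto (fun x => logKernelPrimitive x * (log x - x + 1)) (𝓝[<] 1) (𝓝 0) := by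
  have hbound : Tendsto (fun x : ℝ => 1 - x) (𝓝 1) (𝓝 0) := by
    simpa using (tendsto_const_nhds (x := (1 : ℝ))).sub (tendsto_id (x := 𝓝 (1 : ℝ)))
  refine squeeze_zero_norm' ?_ (hbound.mono_left nhdsWithin_le_nhds)
  filter_upwards [Ioo_mem_nhdsLT one_pos] with x ⟨hx0, hx1⟩
  have h1 : 0 < 1 - x := sub_pos.2 hx1
  have hlog : x - 1 - log x ≤ (1 - x) ^ 2 / x := by
    have := one_sub_inv_le_log_of_pos hx0
    rw [le_div_iff₀ hx0]
    nlinarith [mul_inv_cancel₀ hx0.ne']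
  calc ‖logKernelPrimitive x * (log x - x + 1)‖ ≤ x / (1 - x) * (x - 1 - log x) :=
        abs_logKernelPrimitive_mul_le hx0 hx1
    _ ≤ x / (1 - x) * ((1 - x) ^ 2 / x) := mul_le_mul_of_nonneg_left hlog (by positivity)
    _ = 1 - x := by field_simp

theorem continuousOn_logKernelPrimitive_mul :
    ContinuousOn (fun x => logKernelPrimitive x * (log x - x + 1)) (Icc 0 1) := by
  intro x ⟨hx0, hx1⟩
  rcases hx0.eq_or_lt with rfl | hx0
  · rw [← Ioc_insert_left zero_le_one, continuousWithinAt_insert_self, ContinuousWithinAt,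
      logKernelPrimitive, integral_same, zero_mul]
    exact tendsto_logKernelPrimitive_mul_nhdsGT_zero.mono_left
      (nhdsWithin_mono _ Ioc_subset_Ioi_self)
  rcases hx1.eq_or_lt with rfl | hx1
  · rw [← Ico_insert_right zero_le_one, continuousWithinAt_insert_self, ContinuousWithinAt,
      log_one, zero_sub, neg_add_cancel, mul_zero]
    exact tendsto_logKernelPrimitive_mul_nhdsLT_one.mono_left
      (nhdsWithin_mono _ Ico_subset_Iio_self)
  exact (hasDerivAt_logKernelPrimitive_mul hx0 hx1).continuousAt.continuousWithinAt

theorem intervalIntegrable_inv_sub_one_mul_logKernelPrimitive :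
    IntervalIntegrable (fun x => (x⁻¹ - 1) * logKernelPrimitive x) volume 0 1 := by
  refine (intervalIntegrable_iff_integrableOn_Ioo_of_le zero_le_one).2 <|
    integrableOn_Ioo_of_continuousOn_of_norm_le (C := 1) (fun x hx => ?_) fun x hx => ?_
  · exact (((continuousAt_inv₀ hx.1.ne').sub continuousAt_const).mul
      (hasDerivAt_logKernelPrimitive hx.1 hx.2).continuousAt).continuousWithinAt
  · have h1 : 0 < 1 - x := sub_pos.2 hx.2
    have hinv : 0 ≤ x⁻¹ - 1 := sub_nonneg.2 (one_le_inv₀ hx.1 |>.2 hx.2.le)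
    rw [norm_of_nonneg (mul_nonneg hinv (logKernelPrimitive_nonneg hx.1.le hx.2.le))]
    calc (x⁻¹ - 1) * logKernelPrimitive x ≤ (x⁻¹ - 1) * (x / (1 - x)) :=
          mul_le_mul_of_nonneg_left (logKernelPrimitive_le hx.1.le hx.2) hinv
      _ = 1 := by field_simp [hx.1.ne', h1.ne']

theorem intervalIntegrable_eulerIntegrand : IntervalIntegrable eulerIntegrand volume 0 1 :=
  (intervalIntegrable_iff_integrableOn_Ioo_of_le zero_le_one).2 <|
    integrableOn_Ioo_of_continuousOn_of_norm_le (C := 1) continuousOn_eulerIntegrand fun x hx => by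
      rw [norm_of_nonneg (eulerIntegrand_nonneg hx.1 hx.2)]
      exact eulerIntegrand_le_one hx.1 hx.2

theorem integral_inv_sub_one_mul_logKernelPrimitive :
    ∫ x in (0 : ℝ)..1, (x⁻¹ - 1) * logKernelPrimitive x = ∫ x in (0 : ℝ)..1, eulerIntegrand x := by
  have hFTC := integral_eq_sub_of_hasDerivAt_of_le zero_le_one continuousOn_logKernelPrimitive_mul
    (fun x hx => hasDerivAt_logKernelPrimitive_mul hx.1 hx.2)
    (intervalIntegrable_inv_sub_one_mul_logKernelPrimitive.sub intervalIntegrable_eulerIntegrand)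
  rw [integral_sub intervalIntegrable_inv_sub_one_mul_logKernelPrimitive
    intervalIntegrable_eulerIntegrand] at hFTC
  simpa [logKernelPrimitive, sub_eq_zero] using hFTC

theorem double_integral_eq_gamma :
    ∫ x in (0:ℝ)..1, ∫ y in (0:ℝ)..1,
        (1 - x) / ((1 - x * y) * (-Real.log (x * y)))
      = Real.eulerMascheroniConstant := by
  simp_rw [integral_one_sub_div_mul_neg_log_mul]
  rw [integral_inv_sub_one_mul_logKernelPrimitive, integral_eulerIntegrand]
end

section
/- The double integral ∬_{[0,1]²} (1−x)/((1+xy)(−ln(xy))) dx dy equals ln(4/π). -/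
/-!
Substituting `t = x y` turns the inner integral into `(1 - x) / x * ∫₀ˣ g` with
`g t = 1 / ((1 + t) (-log t))`. Exchanging the order of integration over the triangle
`0 < t ≤ x ≤ 1` and using `∫ₜ¹ (1 - x) / x dx = -log t - (1 - t)` leaves `log 2 - K`, where
`K = ∫₀¹ (1 - t) / ((1 + t) (-log t)) dt`. Expanding `1 / (1 + t)` as a geometric series
(its partial sums keep the integrand bounded by `1`, so dominated convergence applies) and
integrating term by term with Frullani's `∫₀¹ (tᵃ - tᵇ) / (-log t) dt = log ((b + 1) / (a + 1))`
exhibits `K` as the logarithm of the Wallis product, so `K = log (π / 2)`.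
-/

open MeasureTheory Set Filter intervalIntegral Real
open scoped Topology

lemma rpow_sub_rpow_div_neg_log_eq_integral {t : ℝ} (ht₀ : 0 < t) (ht₁ : t ≠ 1)
    (a b : ℝ) :
    (t ^ a - t ^ b) / -log t = ∫ s in a..b, t ^ s := by
  have hlog : log t ≠ 0 := log_ne_zero_of_pos_of_ne_one ht₀ ht₁
  have hderiv (s : ℝ) : HasDerivAt (fun s => t ^ s / log t) (t ^ s) s := by
    simpa [hlog] using (hasStrictDerivAt_const_rpow ht₀ s).hasDerivAt.div_const (log t)
  rw [integral_eq_sub_of_hasDerivAt (fun s _ => hderiv s)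
    ((continuous_const_rpow ht₀.ne').intervalIntegrable _ _)]
  field_simp
  ring

lemma integrableOn_rpow_uIoc_prod {a b : ℝ} (ha : -1 < a) (hb : -1 < b) :
    IntegrableOn (Function.uncurry fun t s : ℝ => t ^ s) (uIoc 0 1 ×ˢ uIoc a b) := by
  have hdom : Integrable (fun z : ℝ × ℝ => z.1 ^ min a b * 1)
      ((volume.restrict (uIoc 0 1)).prod (volume.restrict (uIoc a b))) :=
    (intervalIntegrable_rpow' (lt_min ha hb)).def'.mul_prod intervalIntegrable_const.def'
  rw [IntegrableOn, Measure.volume_eq_prod, ← Measure.prod_restrict]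
  refine hdom.mono' (by fun_prop) ?_
  rw [Measure.prod_restrict]
  filter_upwards [ae_restrict_mem (measurableSet_uIoc.prod measurableSet_uIoc)]
    with ⟨t, s⟩ ⟨ht, hs⟩
  rw [uIoc_of_le zero_le_one] at ht
  rw [Function.uncurry_apply_pair, mul_one, norm_of_nonneg (rpow_nonneg ht.1.le _)]
  exact rpow_le_rpow_of_exponent_ge ht.1 ht.2 hs.1.le

theorem integral_rpow_sub_rpow_div_neg_log {a b : ℝ} (ha : -1 < a) (hb : -1 < b) :
    ∫ t in (0:ℝ)..1, (t ^ a - t ^ b) / -log t = log ((b + 1) / (a + 1)) := calc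
  _ = ∫ t in (0:ℝ)..1, ∫ s in a..b, t ^ s := by
    refine integral_congr_uIoo fun t ht => ?_
    rw [uIoo_of_le zero_le_one] at ht
    exact rpow_sub_rpow_div_neg_log_eq_integral ht.1 ht.2.ne a b
  _ = ∫ s in a..b, ∫ t in (0:ℝ)..1, t ^ s :=
    intervalIntegral_intervalIntegral_swap (integrableOn_rpow_uIoc_prod ha hb)
  _ = ∫ s in a..b, (s + 1)⁻¹ := by
    refine integral_congr fun s hs => ?_
    have hs : -1 < s := (lt_min ha hb).trans_le hs.1
    simp [integral_rpow (Or.inl hs), zero_rpow (by linarith : s + 1 ≠ 0)]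
  _ = log ((b + 1) / (a + 1)) := by
    rw [integral_comp_add_right (fun s => s⁻¹), integral_inv_of_pos (by linarith) (by linarith)]

lemma intervalIntegrable_rpow_sub_rpow_div_neg_log {a b : ℝ} (ha : -1 < a) (hb : -1 < b) :
    IntervalIntegrable (fun t => (t ^ a - t ^ b) / -log t) volume 0 1 := by
  have hprod := integrableOn_rpow_uIoc_prod ha hb
  rw [IntegrableOn, Measure.volume_eq_prod, ← Measure.prod_restrict] at hprod
  have hint : IntegrableOn (fun t : ℝ => ∫ s in a..b, t ^ s) (Ioo 0 1) := by
    simp_rw [intervalIntegral_eq_integral_uIoc]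
    exact IntegrableOn.mono_set (hprod.integral_prod_left.smul (if a ≤ b then (1:ℝ) else -1))
      (uIoc_of_le (zero_le_one' ℝ) ▸ Ioo_subset_Ioc_self)
  rw [intervalIntegrable_iff_integrableOn_Ioo_of_le zero_le_one]
  exact hint.congr_fun (fun t ht => (rpow_sub_rpow_div_neg_log_eq_integral ht.1 ht.2.ne a b).symm)
    measurableSet_Ioo

lemma integral_pow_sub_pow_div_neg_log (i j : ℕ) :
    ∫ t in (0:ℝ)..1, (t ^ i - t ^ j) / -log t = log ((j + 1) / (i + 1)) := by
  simpa only [rpow_natCast] using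
    integral_rpow_sub_rpow_div_neg_log (a := i) (b := j) (by linarith [i.cast_nonneg (α := ℝ)])
      (by linarith [j.cast_nonneg (α := ℝ)])

lemma intervalIntegrable_pow_sub_pow_div_neg_log (i j : ℕ) :
    IntervalIntegrable (fun t : ℝ => (t ^ i - t ^ j) / -log t) volume 0 1 := by
  simpa only [rpow_natCast] using
    intervalIntegrable_rpow_sub_rpow_div_neg_log (a := i) (b := j)
      (by linarith [i.cast_nonneg (α := ℝ)]) (by linarith [j.cast_nonneg (α := ℝ)])

lemma sum_range_pow_two_mul_sub {K : Type*} [Field K] {t : K} (ht : 1 + t ≠ 0) (N : ℕ) :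
    ∑ i ∈ Finset.range N,
        ((t ^ (2 * i) - t ^ (2 * i + 1)) - (t ^ (2 * i + 1) - t ^ (2 * i + 2)))
      = (1 - t) * (1 - t ^ (2 * N)) / (1 + t) := by
  induction N with
  | zero => simp
  | succ N ih =>
    rw [Finset.sum_range_succ, ih]
    field_simp
    ring

-- The `2N`-th partial sum of `∑ₙ (-1)ⁿ (tⁿ - tⁿ⁺¹) / (-log t)`, whose sum is
-- `(1 - t) / ((1 + t) (-log t))`.
noncomputable def wallisFrullaniSum (N : ℕ) (t : ℝ) : ℝ :=
  ∑ i ∈ Finset.range N,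
    ((t ^ (2 * i) - t ^ (2 * i + 1)) / -log t - (t ^ (2 * i + 1) - t ^ (2 * i + 2)) / -log t)

lemma wallisFrullaniSum_eq {t : ℝ} (ht : 0 < t) (N : ℕ) :
    wallisFrullaniSum N t = (1 - t) * (1 - t ^ (2 * N)) / ((1 + t) * -log t) := by
  simp_rw [wallisFrullaniSum, ← sub_div, ← Finset.sum_div,
    sum_range_pow_two_mul_sub (by positivity : 1 + t ≠ 0)]
  rw [div_div]

lemma intervalIntegrable_wallisFrullaniSum (N : ℕ) :
    IntervalIntegrable (wallisFrullaniSum N) volume 0 1 := by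
  unfold wallisFrullaniSum
  simpa only [Finset.sum_fn] using IntervalIntegrable.sum (Finset.range N) fun i _ =>
    (intervalIntegrable_pow_sub_pow_div_neg_log (2 * i) (2 * i + 1)).sub
      (intervalIntegrable_pow_sub_pow_div_neg_log (2 * i + 1) (2 * i + 2))

lemma integral_wallisFrullaniSum (N : ℕ) :
    ∫ t in (0:ℝ)..1, wallisFrullaniSum N t
      = log (∏ i ∈ Finset.range N,
          ((2:ℝ) * i + 2) / (2 * i + 1) * ((2 * i + 2) / (2 * i + 3))) := by
  unfold wallisFrullaniSum
  rw [integral_finsetSum fun i _ =>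
      (intervalIntegrable_pow_sub_pow_div_neg_log _ _).sub
        (intervalIntegrable_pow_sub_pow_div_neg_log _ _),
    log_prod fun i _ => by positivity]
  refine Finset.sum_congr rfl fun i _ => ?_
  rw [integral_sub (intervalIntegrable_pow_sub_pow_div_neg_log _ _)
    (intervalIntegrable_pow_sub_pow_div_neg_log _ _), integral_pow_sub_pow_div_neg_log,
    integral_pow_sub_pow_div_neg_log, log_mul (by positivity) (by positivity),
    log_div (by positivity) (by positivity), log_div (by positivity) (by positivity),
    log_div (by positivity) (by positivity), log_div (by positivity) (by positivity)]
  push_cast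
  ring_nf

lemma norm_one_sub_mul_div_one_add_mul_neg_log_le_one {t c : ℝ} (ht : t ∈ Ioc 0 1)
    (hc₀ : 0 ≤ c) (hc₁ : c ≤ 1) : ‖(1 - t) * c / ((1 + t) * -log t)‖ ≤ 1 := by
  have hlog : 1 - t ≤ -log t := by linarith [log_le_sub_one_of_pos ht.1]
  have hden : 0 ≤ (1 + t) * -log t :=
    mul_nonneg (by linarith [ht.1]) (neg_nonneg.2 (log_nonpos ht.1.le ht.2))
  rw [norm_div, norm_of_nonneg (mul_nonneg (sub_nonneg.2 ht.2) hc₀), norm_of_nonneg hden]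
  refine div_le_one_of_le₀ ?_ hden
  nlinarith [mul_le_mul_of_nonneg_left hc₁ (sub_nonneg.2 ht.2), ht.1]

lemma norm_wallisFrullaniSum_le_one {t : ℝ} (ht : t ∈ Ioc 0 1) (N : ℕ) :
    ‖wallisFrullaniSum N t‖ ≤ 1 := by
  rw [wallisFrullaniSum_eq ht.1]
  exact norm_one_sub_mul_div_one_add_mul_neg_log_le_one ht
    (sub_nonneg.2 (pow_le_one₀ ht.1.le ht.2)) (sub_le_self _ (pow_nonneg ht.1.le _))

lemma tendsto_wallisFrullaniSum {t : ℝ} (ht : t ∈ Ioc 0 1) :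
    Tendsto (wallisFrullaniSum · t) atTop (𝓝 ((1 - t) / ((1 + t) * -log t))) := by
  simp_rw [wallisFrullaniSum_eq ht.1]
  rcases ht.2.eq_or_lt with rfl | ht₁
  · simp
  have hpow : Tendsto (fun N => t ^ (2 * N)) atTop (𝓝 0) := by
    simp_rw [pow_mul]
    exact tendsto_pow_atTop_nhds_zero_of_lt_one (by positivity) (by nlinarith [ht.1])
  simpa using ((hpow.const_sub 1).const_mul (1 - t)).div_const ((1 + t) * -log t)

lemma intervalIntegrable_one_sub_div_one_add_mul_neg_log :
    IntervalIntegrable (fun t => (1 - t) / ((1 + t) * -log t)) volume 0 1 := by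
  refine (intervalIntegrable_const (c := (1:ℝ))).mono_fun'
    (Measurable.aestronglyMeasurable (by fun_prop)) <|
    (ae_restrict_iff' measurableSet_uIoc).2 (.of_forall fun t ht => ?_)
  rw [uIoc_of_le zero_le_one] at ht
  simpa using norm_one_sub_mul_div_one_add_mul_neg_log_le_one ht zero_le_one (le_refl (1:ℝ))

theorem integral_one_sub_div_one_add_mul_neg_log :
    ∫ t in (0:ℝ)..1, (1 - t) / ((1 + t) * -log t) = log (π / 2) := by
  have hI : uIoc (0:ℝ) 1 = Ioc 0 1 := uIoc_of_le zero_le_one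
  have hlim := tendsto_integral_filter_of_dominated_convergence (fun _ => 1)
    (.of_forall fun N => (intervalIntegrable_wallisFrullaniSum N).def'.aestronglyMeasurable)
    (.of_forall fun N => .of_forall fun t ht => norm_wallisFrullaniSum_le_one (hI ▸ ht) N)
    intervalIntegrable_const (.of_forall fun t ht => tendsto_wallisFrullaniSum (hI ▸ ht))
  refine tendsto_nhds_unique hlim ?_
  simp_rw [integral_wallisFrullaniSum]
  exact (continuousAt_log (by positivity)).tendsto.comp Real.tendsto_prod_pi_div_two

section Triangle

variable {a b : ℝ} {w f : ℝ → ℝ}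

lemma restrict_Ioc_restrict_Ici {t : ℝ} (ht : t ∈ Ioc a b) :
    (volume.restrict (Ioc a b)).restrict (Ici t) = volume.restrict (Ioc t b) := by
  have hset : Ici t ∩ Ioc a b = Icc t b := by
    ext x
    simp only [mem_inter_iff, mem_Ici, mem_Ioc, mem_Icc]
    constructor
    · rintro ⟨htx, -, hxb⟩; exact ⟨htx, hxb⟩
    · rintro ⟨htx, hxb⟩; exact ⟨htx, ht.1.trans_le htx, hxb⟩
  rw [Measure.restrict_restrict measurableSet_Ici, hset]
  exact Measure.restrict_congr_set Ioc_ae_eq_Icc.symm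

lemma integral_Ioc_ite_le_of_mem {x : ℝ} (hx : x ∈ Ioc a b) :
    ∫ t in Ioc a b, (if t ≤ x then w x * f t else 0) = w x * ∫ t in a..x, f t := by
  have hind : (fun t => if t ≤ x then w x * f t else 0) =
      (Iic x).indicator (fun t => w x * f t) :=
    funext fun t => by simp [indicator_apply]
  rw [hind, MeasureTheory.integral_indicator measurableSet_Iic,
    Measure.restrict_restrict measurableSet_Iic, inter_comm, Ioc_inter_Iic, min_eq_right hx.2,
    MeasureTheory.integral_const_mul, integral_of_le hx.1.le]

lemma integral_Ioc_ite_ge_of_mem {t : ℝ} (ht : t ∈ Ioc a b) :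
    ∫ x in Ioc a b, (if t ≤ x then w x * f t else 0) = f t * ∫ x in t..b, w x := by
  have hind : (fun x => if t ≤ x then w x * f t else 0) =
      (Ici t).indicator (fun x => w x * f t) :=
    funext fun x => by simp [indicator_apply]
  rw [hind, MeasureTheory.integral_indicator measurableSet_Ici, restrict_Ioc_restrict_Ici ht,
    MeasureTheory.integral_mul_const, mul_comm, integral_of_le ht.2]

theorem intervalIntegral_mul_intervalIntegral_swap (hab : a ≤ b)
    (hint : Integrable (Function.uncurry fun x t => if t ≤ x then w x * f t else 0)
      ((volume.restrict (Ioc a b)).prod (volume.restrict (Ioc a b)))) :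
    ∫ x in a..b, w x * ∫ t in a..x, f t = ∫ t in a..b, f t * ∫ x in t..b, w x := by
  rw [integral_of_le hab, integral_of_le hab,
    setIntegral_congr_fun measurableSet_Ioc fun x hx => (integral_Ioc_ite_le_of_mem hx).symm,
    integral_integral_swap hint]
  exact setIntegral_congr_fun measurableSet_Ioc fun t ht => integral_Ioc_ite_ge_of_mem ht

lemma integrable_ite_le_of_nonneg (hw : Measurable w) (hf : Measurable f)
    (hw₀ : ∀ x ∈ Ioc a b, 0 ≤ w x) (hf₀ : ∀ t ∈ Ioc a b, 0 ≤ f t)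
    (hw_int : ∀ t ∈ Ioc a b, IntervalIntegrable w volume t b)
    (hint : IntervalIntegrable (fun t => f t * ∫ x in t..b, w x) volume a b) :
    Integrable (Function.uncurry fun x t => if t ≤ x then w x * f t else 0)
      ((volume.restrict (Ioc a b)).prod (volume.restrict (Ioc a b))) := by
  have hmeas : Measurable (Function.uncurry fun x t => if t ≤ x then w x * f t else 0) :=
    Measurable.ite (measurableSet_le measurable_snd measurable_fst) (by fun_prop) measurable_const
  refine (integrable_prod_iff' hmeas.aestronglyMeasurable).2 ⟨?_, ?_⟩
  · refine (ae_restrict_iff' measurableSet_Ioc).2 (.of_forall fun t ht => ?_)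
    have hind : (fun x => if t ≤ x then w x * f t else 0) =
        (Ici t).indicator (fun x => w x * f t) :=
      funext fun x => by simp [indicator_apply]
    simp only [Function.uncurry_apply_pair]
    rw [hind, integrable_indicator_iff measurableSet_Ici, IntegrableOn,
      restrict_Ioc_restrict_Ici ht]
    exact (hw_int t ht).1.mul_const _
  · refine hint.1.congr_fun (fun t ht => ?_) measurableSet_Ioc
    simp only [Function.uncurry_apply_pair]
    rw [← integral_Ioc_ite_ge_of_mem ht]
    refine setIntegral_congr_fun measurableSet_Ioc fun x hx => ?_
    split_ifs
    · exact (norm_of_nonneg (mul_nonneg (hw₀ x hx) (hf₀ t ht))).symm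
    · exact norm_zero.symm

end Triangle

lemma integral_one_sub_div_one_add_mul_mul_neg_log {x : ℝ} (hx : 0 < x) :
    ∫ y in (0:ℝ)..1, (1 - x) / ((1 + x * y) * -log (x * y))
      = (1 - x) / x * ∫ t in (0:ℝ)..x, ((1 + t) * -log t)⁻¹ := by
  simp_rw [div_eq_mul_inv (1 - x)]
  rw [intervalIntegral.integral_const_mul,
    integral_comp_mul_left (fun t => ((1 + t) * -log t)⁻¹) hx.ne',
    mul_zero, mul_one, smul_eq_mul]
  ring

lemma integral_one_sub_div_self {t : ℝ} (ht : 0 < t) :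
    ∫ x in t..1, (1 - x) / x = -log t - (1 - t) := by
  have hpos (x : ℝ) (hx : x ∈ uIcc t 1) : 0 < x := lt_min ht one_pos |>.trans_le hx.1
  have hinv : IntervalIntegrable (fun x : ℝ => x⁻¹) volume t 1 :=
    intervalIntegrable_inv (fun x hx => (hpos x hx).ne') continuousOn_id
  calc ∫ x in t..1, (1 - x) / x = ∫ x in t..1, (x⁻¹ - 1) :=
        integral_congr fun x hx => by field_simp [(hpos x hx).ne']
    _ = -log t - (1 - t) := by
      rw [integral_sub hinv intervalIntegrable_const, integral_inv_of_pos ht one_pos,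
        intervalIntegral.integral_const, one_div, log_inv, smul_eq_mul, mul_one]

lemma integral_inv_one_add : ∫ t in (0:ℝ)..1, (1 + t)⁻¹ = log 2 := by
  rw [integral_comp_add_left (fun t => t⁻¹), integral_inv_of_pos (by norm_num) (by norm_num)]
  norm_num

lemma intervalIntegrable_inv_one_add :
    IntervalIntegrable (fun t : ℝ => (1 + t)⁻¹) volume 0 1 :=
  intervalIntegrable_inv (fun t ht => by rw [uIcc_of_le zero_le_one] at ht; linarith [ht.1])
    (by fun_prop)

lemma inv_one_add_mul_neg_log_mul_integral_eq {t : ℝ} (ht : t ∈ Ioo 0 1) :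
    ((1 + t) * -log t)⁻¹ * ∫ x in t..1, (1 - x) / x
      = (1 + t)⁻¹ - (1 - t) / ((1 + t) * -log t) := by
  have hlog : log t ≠ 0 := (log_neg ht.1 ht.2).ne
  have h1t : 1 + t ≠ 0 := by linarith [ht.1]
  rw [integral_one_sub_div_self ht.1]
  field_simp
  ring

lemma integral_inv_one_add_mul_neg_log_mul_integral :
    ∫ t in (0:ℝ)..1, ((1 + t) * -log t)⁻¹ * ∫ x in t..1, (1 - x) / x
      = log 2 - log (π / 2) := by
  rw [integral_congr_uIoo fun t ht =>
      inv_one_add_mul_neg_log_mul_integral_eq (uIoo_of_le (zero_le_one' ℝ) ▸ ht),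
    integral_sub intervalIntegrable_inv_one_add intervalIntegrable_one_sub_div_one_add_mul_neg_log,
    integral_inv_one_add, integral_one_sub_div_one_add_mul_neg_log]

lemma integrable_ite_le_one_sub_div_mul_inv_one_add_mul_neg_log :
    Integrable (Function.uncurry fun x t : ℝ =>
        if t ≤ x then (1 - x) / x * ((1 + t) * -log t)⁻¹ else 0)
      ((volume.restrict (Ioc 0 1)).prod (volume.restrict (Ioc 0 1))) := by
  have hint : IntervalIntegrable (fun t => ((1 + t) * -log t)⁻¹ * ∫ x in t..1, (1 - x) / x)
      volume 0 1 := by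
    have := intervalIntegrable_inv_one_add.sub intervalIntegrable_one_sub_div_one_add_mul_neg_log
    rw [intervalIntegrable_iff_integrableOn_Ioo_of_le zero_le_one] at this ⊢
    exact this.congr_fun (fun t ht => (inv_one_add_mul_neg_log_mul_integral_eq ht).symm)
      measurableSet_Ioo
  refine integrable_ite_le_of_nonneg (by fun_prop) (by fun_prop) (fun x hx => ?_)
    (fun t ht => ?_) (fun t ht => ?_) hint
  · exact div_nonneg (sub_nonneg.2 hx.2) hx.1.le
  · exact inv_nonneg.2 (mul_nonneg (by linarith [ht.1]) (neg_nonneg.2 (log_nonpos ht.1.le ht.2)))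
  · refine ContinuousOn.intervalIntegrable <|
      (continuousOn_const.sub continuousOn_id).div continuousOn_id fun x hx => ?_
    rw [uIcc_of_le ht.2] at hx
    exact (ht.1.trans_le hx.1).ne'

theorem double_integral_eq_log_four_div_pi :
    ∫ x in (0:ℝ)..1, ∫ y in (0:ℝ)..1,
        (1 - x) / ((1 + x * y) * (-Real.log (x * y)))
      = Real.log (4 / Real.pi) := calc
  _ = ∫ x in (0:ℝ)..1, (1 - x) / x * ∫ t in (0:ℝ)..x, ((1 + t) * -log t)⁻¹ :=
    integral_congr_uIoo fun x hx =>
      integral_one_sub_div_one_add_mul_mul_neg_log (uIoo_of_le (zero_le_one' ℝ) ▸ hx).1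
  _ = ∫ t in (0:ℝ)..1, ((1 + t) * -log t)⁻¹ * ∫ x in t..1, (1 - x) / x :=
    intervalIntegral_mul_intervalIntegral_swap zero_le_one
      integrable_ite_le_one_sub_div_mul_inv_one_add_mul_neg_log
  _ = log 2 - log (π / 2) := integral_inv_one_add_mul_neg_log_mul_integral
  _ = log (4 / π) := by
    rw [← log_div two_ne_zero (by positivity)]
    congr 1
    field_simp
    ring
end

section
/- Euler's formula: γ = ln(4/π) + 2 ∑_{n=2}^∞ (−1)^n ζ(n)/(2^n n), where ζ is the Riemann zeta function. -/
/-!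
For `0 < x`, the Weierstrass product of `Γ` in logarithmic form reads
`log Γ(x + 1) + γ x = ∑ₖ (x / (k + 1) - log (1 + x / (k + 1)))`.
For `x < 1`, each summand expands as `∑_{n ≥ 2} (-x / (k + 1)) ^ n / n`; the resulting double
series converges absolutely, and summing it over `k` first gives
`log Γ(x + 1) = -γ x + ∑_{n ≥ 2} (-x) ^ n ζ(n) / n`. At `x = 1/2`, `Γ(3/2) = √π / 2`.
-/

open Finset

namespace Real

theorem sum_range_log_one_add_div {x : ℝ} (hx : 0 < x) (n : ℕ) :
    ∑ k ∈ range n, log (1 + x / (k + 1))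
      = x * log n - log x - BohrMollerup.logGammaSeq x n := by
  induction n with
  | zero => simp [BohrMollerup.logGammaSeq]
  | succ n ih =>
    have hn : (0 : ℝ) < n + 1 := by positivity
    have hfactorial : log ((n + 1).factorial : ℕ) = log (n + 1) + log (n.factorial : ℕ) := by
      push_cast [Nat.factorial_succ]
      exact log_mul hn.ne' (by positivity)
    have hterm : log (1 + x / (n + 1)) = log (x + (n + 1)) - log (n + 1) := by
      rw [← log_div (by positivity) hn.ne']
      congr 1
      field_simp
      ring
    rw [sum_range_succ, ih, hterm]
    simp only [BohrMollerup.logGammaSeq, sum_range_succ, hfactorial]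
    push_cast
    ring

theorem hasSum_sub_log_one_add_div {x : ℝ} (hx : 0 < x) :
    HasSum (fun k : ℕ => x / (k + 1) - log (1 + x / (k + 1)))
      (log (Gamma (x + 1)) + eulerMascheroniConstant * x) := by
  have hterm_nonneg (k : ℕ) : 0 ≤ x / (k + 1) - log (1 + x / (k + 1)) := by
    linarith [log_le_sub_one_of_pos (show 0 < 1 + x / (k + 1) by positivity)]
  rw [hasSum_iff_tendsto_nat_of_nonneg hterm_nonneg]
  have hpartial (n : ℕ) : ∑ k ∈ range n, (x / (k + 1) - log (1 + x / (k + 1)))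
      = BohrMollerup.logGammaSeq x n + log x + x * (harmonic n - log n) := by
    have hharmonic : ∑ k ∈ range n, x / ((k : ℝ) + 1) = x * harmonic n := by
      simp [harmonic, mul_sum, div_eq_mul_inv]
    rw [sum_sub_distrib, hharmonic, sum_range_log_one_add_div hx]
    ring
  have hlimit : log (Gamma (x + 1)) + eulerMascheroniConstant * x
      = log (Gamma x) + log x + x * eulerMascheroniConstant := by
    rw [Gamma_add_one hx.ne', log_mul hx.ne' (Gamma_pos_of_pos hx).ne']
    ring
  simp only [hpartial, hlimit]
  exact ((BohrMollerup.tendsto_log_gamma hx).add_const _).add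
    (tendsto_harmonic_sub_log.const_mul x)

theorem hasSum_sub_log_one_add_of_abs_lt_one {y : ℝ} (hy : |y| < 1) :
    HasSum (fun n : ℕ => (-y) ^ (n + 2) / (n + 2)) (y - log (1 + y)) := by
  have hlog := hasSum_pow_div_log_of_abs_lt_one (x := -y) (by rwa [abs_neg])
  rw [sub_neg_eq_add] at hlog
  have htail := (hasSum_nat_add_iff' 1).mpr hlog
  norm_num [add_assoc, one_add_one_eq_two] at htail
  rwa [sub_eq_neg_add]

theorem summable_taylor_log_one_add_div {x : ℝ} (hx₀ : 0 ≤ x) (hx₁ : x < 1) :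
    Summable (fun p : ℕ × ℕ => (-(x / (p.2 + 1))) ^ (p.1 + 2) / (p.1 + 2)) := by
  have hgeometric : Summable (fun n : ℕ => x ^ n) := summable_geometric_of_lt_one hx₀ hx₁
  have hsquares : Summable (fun k : ℕ => (1 / ((k : ℝ) + 1)) ^ 2) := by
    simpa using (summable_nat_add_iff 1).mpr (summable_one_div_nat_pow.mpr one_lt_two)
  refine Summable.of_norm_bounded (hgeometric.mul_of_nonneg hsquares (fun _ => by positivity)
    (fun _ => by positivity)) fun ⟨n, k⟩ => ?_
  have hk : (1 : ℝ) ≤ k + 1 := by simp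
  calc ‖(-(x / (k + 1))) ^ (n + 2) / (n + 2)‖
      ≤ (x / (k + 1)) ^ n * (x / (k + 1)) ^ 2 := by
        rw [norm_div, norm_pow, norm_neg, norm_of_nonneg (by positivity),
          norm_of_nonneg (by positivity), ← pow_add]
        exact div_le_self (by positivity) (by linarith)
    _ ≤ x ^ n * (1 / (k + 1)) ^ 2 := by
        gcongr
        exact div_le_self hx₀ hk

theorem hasSum_log_Gamma_add_one {x : ℝ} (hx₀ : 0 < x) (hx₁ : x < 1) :
    HasSum (fun n : ℕ => (-x) ^ (n + 2) * (∑' k : ℕ, 1 / ((k : ℝ) + 1) ^ (n + 2)) / (n + 2))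
      (log (Gamma (x + 1)) + eulerMascheroniConstant * x) := by
  have hf := (summable_taylor_log_one_add_div hx₀.le hx₁).hasSum
  have hsum_eq : ∑' p : ℕ × ℕ, (-(x / (p.2 + 1))) ^ (p.1 + 2) / (p.1 + 2)
      = log (Gamma (x + 1)) + eulerMascheroniConstant * x := by
    have hswap := (Equiv.prodComm ℕ ℕ).symm.hasSum_iff.mpr hf
    refine (hswap.prod_fiberwise fun k => ?_).unique (hasSum_sub_log_one_add_div hx₀)
    have hk : |x / (k + 1)| < 1 := by
      rw [abs_of_nonneg (by positivity), div_lt_one (by positivity)]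
      linarith [k.cast_nonneg (α := ℝ)]
    simpa only [Function.comp_apply, Equiv.prodComm_symm, Equiv.prodComm_apply, Prod.swap_prod_mk]
      using hasSum_sub_log_one_add_of_abs_lt_one hk
  rw [← hsum_eq]
  refine hf.prod_fiberwise fun n => ?_
  have hzeta : Summable (fun k : ℕ => 1 / ((k : ℝ) + 1) ^ (n + 2)) := by
    simpa using (summable_nat_add_iff 1).mpr (summable_one_div_nat_pow.mpr (by omega : 1 < n + 2))
  rw [mul_div_right_comm]
  refine (hzeta.hasSum.mul_left _).congr_fun fun k => ?_
  rw [← neg_div, div_pow]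
  ring

end Real

theorem euler_formula_gamma :
    Real.eulerMascheroniConstant
      = Real.log (4 / Real.pi)
        + 2 * ∑' n : ℕ, (-1 : ℝ) ^ (n + 2)
            * (∑' k : ℕ, 1 / ((k : ℝ) + 1) ^ (n + 2)) / (2 ^ (n + 2) * (n + 2)) := by
  have hseries := Real.hasSum_log_Gamma_add_one (x := 1 / 2) (by norm_num) (by norm_num)
  have hsum : ∑' n : ℕ, (-1 : ℝ) ^ (n + 2)
      * (∑' k : ℕ, 1 / ((k : ℝ) + 1) ^ (n + 2)) / (2 ^ (n + 2) * (n + 2))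
      = Real.log (Real.Gamma (1 / 2 + 1)) + Real.eulerMascheroniConstant * (1 / 2) := by
    refine (hseries.congr_fun fun n => ?_).tsum_eq
    rw [← neg_div, div_pow, div_mul_eq_mul_div, div_div]
  have hGamma : Real.Gamma (1 / 2 + 1) = √Real.pi / 2 := by
    rw [Real.Gamma_add_one (by norm_num), Real.Gamma_one_half_eq]
    ring
  rw [hsum, hGamma, Real.log_div (by positivity) two_ne_zero, Real.log_sqrt Real.pi_pos.le,
    Real.log_div (by norm_num) Real.pi_ne_zero, show (4 : ℝ) = 2 ^ 2 by norm_num, Real.log_pow]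
  push_cast
  ring
end

section
/- For real s > −2, the double integral ∬_{[0,1]²} ((1−x)/(1−xy)) (−ln(xy))^s dx dy equals Γ(s+2)·(ζ(s+2) − 1/(s+1)) for s ≠ −1, where ζ denotes the analytically continued Riemann zeta function and Γ the Gamma function. (Hadjicostas's formula; for s = −1 the right side is interpreted by the limit, giving γ.) -/
/-!
Substituting `x = e^{-t}`, `y = e^{-u}` and then `v = t + u`, the integral becomes
`∫₀^∞ v^s φ(v) dv` with `φ(v) = (∫₀^v (1 - e^{-t}) dt) / (e^v - 1) = v / (e^v - 1) - e^{-v}`.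
Expanding `1 / (e^v - 1)` as a geometric series gives the Mellin transform
`Γ(w + 1) ζ(w + 1) - Γ(w)` of `φ` for `Re w > 0`. As `φ(v) = O(v)` at `0` and `φ` decays
exponentially, its Mellin transform is holomorphic on `Re w > -1`, and the identity extends to
`w = s + 1` by analytic continuation.
-/

open MeasureTheory Set Filter Asymptotics Topology Real

section

variable {E : Type*} [NormedAddCommGroup E] [NormedSpace ℝ E]

lemma integral_zero_one_eq_integral_Ioi_exp_neg (g : ℝ → E) :
    ∫ x in (0 : ℝ)..1, g x = ∫ t in Ioi 0, exp (-t) • g (exp (-t)) := by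
  rw [intervalIntegral.integral_of_le zero_le_one, integral_Ioc_eq_integral_Ioo]
  have himage : (fun t ↦ exp (-t)) '' Ioi 0 = Ioo 0 1 := by
    ext x
    refine ⟨?_, fun hx ↦ ⟨-log x, neg_pos.mpr (log_neg hx.1 hx.2), by simp [exp_log hx.1]⟩⟩
    rintro ⟨t, ht, rfl⟩
    exact ⟨exp_pos _, exp_lt_one_iff.mpr (neg_neg_of_pos ht)⟩
  rw [← himage, integral_image_eq_integral_abs_deriv_smul (f := fun t ↦ exp (-t))
    measurableSet_Ioi
    (fun t _ ↦ (hasDerivAt_exp (-t)).comp t (hasDerivAt_neg t) |>.hasDerivWithinAt)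
    (exp_injective.comp neg_injective).injOn]
  simp

lemma integral_comp_add_left_Ioi (g : ℝ → E) (a b : ℝ) :
    ∫ x in Ioi a, g (b + x) = ∫ x in Ioi (b + a), g x := by
  rw [← integral_indicator measurableSet_Ioi, ← integral_indicator measurableSet_Ioi,
    ← integral_add_left_eq_self ((Ioi (b + a)).indicator g) b]
  congr 1 with x
  simp [indicator_apply]

end

lemma integral_Ioi_mul_integral_Ioi_swap {f g : ℝ → ℝ} {a : ℝ} (hf : Measurable f)
    (hg : Measurable g) (hf_int : ∀ v, IntegrableOn f (Ioo a v))
    (hfg : IntegrableOn (fun v ↦ ‖g v‖ * ∫ t in Ioo a v, ‖f t‖) (Ioi a)) :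
    ∫ t in Ioi a, f t * ∫ v in Ioi t, g v = ∫ v in Ioi a, g v * ∫ t in Ioo a v, f t := by
  let F : ℝ → ℝ → ℝ := fun t v ↦ if a < t ∧ t < v then f t * g v else 0
  have hF_sect (v : ℝ) : (fun t ↦ F t v) = (Ioo a v).indicator (fun t ↦ f t * g v) := by
    ext t; simp only [F, indicator_apply, mem_Ioo]
  have hF_meas : Measurable (Function.uncurry F) :=
    Measurable.ite ((measurableSet_lt measurable_const measurable_fst).inter
      (measurableSet_lt measurable_fst measurable_snd)) (by fun_prop) measurable_const
  have hF_int : Integrable (Function.uncurry F) (volume.prod volume) := by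
    refine (integrable_prod_iff' hF_meas.aestronglyMeasurable).mpr ⟨.of_forall fun v ↦ ?_, ?_⟩
    · rw [Function.uncurry_def, hF_sect, integrable_indicator_iff measurableSet_Ioo]
      exact (hf_int v).mul_const (g v)
    · refine (hfg.integrable_of_forall_notMem_eq_zero fun v hv ↦ ?_).congr
        (.of_forall fun v ↦ ?_)
      · rw [Ioo_eq_empty (by simpa using hv), Measure.restrict_empty, integral_zero_measure,
          mul_zero]
      · simp only [Function.uncurry_apply_pair, fun t ↦ congrArg norm (congrFun (hF_sect v) t),
          norm_indicator_eq_indicator_norm, integral_indicator measurableSet_Ioo, norm_mul,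
          integral_mul_const, mul_comm]
  have hF_left : ∀ t ∉ Ioi a, ∫ v, F t v = 0 := fun t ht ↦ by
    simp [F, show ¬ a < t from ht]
  have hF_right : ∀ v ∉ Ioi a, ∫ t, F t v = 0 := fun v hv ↦ by
    simp [hF_sect, Ioo_eq_empty (show ¬ a < v from hv)]
  calc ∫ t in Ioi a, f t * ∫ v in Ioi t, g v = ∫ t, ∫ v, F t v := by
        rw [← setIntegral_eq_integral_of_forall_compl_eq_zero hF_left]
        refine setIntegral_congr_fun measurableSet_Ioi fun t ht ↦ ?_
        rw [← integral_const_mul, ← integral_indicator measurableSet_Ioi]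
        congr 1 with v
        simp [F, indicator_apply, mem_Ioi.mp ht]
    _ = ∫ v, ∫ t, F t v := integral_integral_swap hF_int
    _ = ∫ v in Ioi a, g v * ∫ t in Ioo a v, f t := by
        rw [← setIntegral_eq_integral_of_forall_compl_eq_zero hF_right]
        refine setIntegral_congr_fun measurableSet_Ioi fun v _ ↦ ?_
        rw [hF_sect, integral_indicator measurableSet_Ioo, integral_mul_const, mul_comm]

lemma integral_one_sub_exp_neg (v : ℝ) : ∫ t in (0 : ℝ)..v, (1 - exp (-t)) = v - 1 + exp (-v) := by
  have hexp : Continuous fun t : ℝ ↦ exp (-t) := by fun_prop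
  rw [intervalIntegral.integral_sub intervalIntegrable_const (hexp.intervalIntegrable 0 v),
    intervalIntegral.integral_comp_neg (fun t ↦ exp t), integral_exp]
  simp
  ring

lemma isPreconnected_re_gt_diff_singleton (a : ℝ) (c : ℂ) :
    IsPreconnected ({s : ℂ | a < s.re} \ {c}) := by
  let h : ℂ → ℂ := fun z ↦ (a + exp z.re : ℝ) + z.im * Complex.I
  have h_re (z : ℂ) : (h z).re = a + exp z.re := by simp [h, -Complex.ofReal_exp]
  have h_im (z : ℂ) : (h z).im = z.im := by simp [h]
  have hinj : Function.Injective h := fun z w hzw ↦ by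
    have hre := h_re z ▸ h_re w ▸ congrArg Complex.re hzw
    exact Complex.ext (exp_injective (by linarith)) (h_im z ▸ h_im w ▸ congrArg Complex.im hzw)
  have hrange : range h = {s : ℂ | a < s.re} := by
    ext w
    refine ⟨?_, fun hw ↦ ⟨log (w.re - a) + w.im * Complex.I, ?_⟩⟩
    · rintro ⟨z, rfl⟩
      simp [h_re, exp_pos]
    · apply Complex.ext <;> simp [h_re, h_im, exp_log (sub_pos.mpr hw)]
  rw [← hrange, ← image_compl_preimage]
  exact ((countable_singleton c).preimage hinj).isConnected_compl_of_one_lt_rank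
    (by simp) |>.isPreconnected.image _ (by fun_prop)

lemma differentiableAt_Gamma_add_one {s : ℂ} (hs : -1 < s.re) :
    DifferentiableAt ℂ (fun z ↦ Complex.Gamma (z + 1)) s := by
  refine (Complex.differentiableAt_Gamma _ fun m hm ↦ ?_).comp s (differentiableAt_id.add_const 1)
  have := congrArg Complex.re hm
  simp only [Complex.add_re, Complex.one_re, Complex.neg_re, Complex.natCast_re] at this
  linarith [m.cast_nonneg (α := ℝ)]

lemma mellin_ofReal (f : ℝ → ℝ) (s : ℝ) :
    mellin (fun t ↦ (f t : ℂ)) s = ((∫ t in Ioi 0, t ^ (s - 1) * f t : ℝ) : ℂ) := by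
  refine (setIntegral_congr_fun measurableSet_Ioi fun t ht ↦ ?_).trans integral_ofReal
  rw [smul_eq_mul, RCLike.ofReal_mul, ← Complex.ofReal_one, ← Complex.ofReal_sub,
    ← Complex.ofReal_cpow (le_of_lt ht)]
  rfl

lemma mellin_inv_exp_sub_one {s : ℂ} (hs : 1 < s.re) :
    mellin (fun t ↦ (((exp t - 1)⁻¹ : ℝ) : ℂ)) s = Complex.Gamma s * riemannZeta s := by
  have hsum := hasSum_mellin (a := fun _ : ℕ ↦ (1 : ℂ)) (p := fun n ↦ n + 1)
    (F := fun t ↦ (((exp t - 1)⁻¹ : ℝ) : ℂ)) (fun _ ↦ Or.inr (by positivity)) (by linarith) ?_ ?_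
  · rw [← hsum.tsum_eq, zeta_eq_tsum_one_div_nat_add_one_cpow hs, ← tsum_mul_left]
    push_cast
    simp_rw [mul_one, mul_one_div]
  · intro t ht
    have hr : exp (-t) < 1 := exp_lt_one_iff.mpr (neg_neg_of_pos ht)
    have hgeo := (hasSum_geometric_of_lt_one (exp_pos _).le hr).mul_left (exp (-t))
    convert Complex.hasSum_ofReal.mpr hgeo using 1
    · ext n
      rw [one_mul, ← exp_nat_mul, ← exp_add]
      push_cast; ring_nf
    · congr 1
      rw [exp_neg]
      field_simp [(sub_pos.mpr (one_lt_exp_iff.mpr ht)).ne']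
  · simp_rw [norm_one]
    refine ((summable_nat_add_iff 1).mpr (summable_one_div_nat_rpow.mpr hs)).congr fun n ↦ ?_
    push_cast; rfl

lemma mellin_div_exp_sub_one {s : ℂ} (hs : 0 < s.re) :
    mellin (fun t ↦ ((t / (exp t - 1) : ℝ) : ℂ)) s
      = Complex.Gamma (s + 1) * riemannZeta (s + 1) := by
  rw [← mellin_inv_exp_sub_one (by simp [hs]), ← mellin_cpow_smul]
  congr 1 with t
  push_cast
  rw [Complex.cpow_one, smul_eq_mul, div_eq_mul_inv]

noncomputable def hadjicostasKernel (t : ℝ) : ℝ := (t - 1 + exp (-t)) / (exp t - 1)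

lemma hadjicostasKernel_nonneg {t : ℝ} (ht : 0 < t) : 0 ≤ hadjicostasKernel t :=
  div_nonneg (by linarith [add_one_le_exp (-t)]) (sub_pos.mpr (one_lt_exp_iff.mpr ht)).le

lemma hadjicostasKernel_le_self {t : ℝ} (ht : 0 < t) (ht1 : t ≤ 1) : hadjicostasKernel t ≤ t := by
  have hnum : t - 1 + exp (-t) ≤ t ^ 2 := by
    have := abs_le.mp (abs_exp_sub_one_sub_id_le (x := -t) (by rwa [abs_neg, abs_of_pos ht]))
    linarith [this.2]
  rw [hadjicostasKernel, div_le_iff₀ (sub_pos.mpr (one_lt_exp_iff.mpr ht))]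
  nlinarith [add_one_le_exp t]

lemma hadjicostasKernel_le_exp {t : ℝ} (ht : 1 ≤ t) :
    hadjicostasKernel t ≤ 4 * exp (-(1 / 2) * t) := by
  have hsq : exp (-(1 / 2) * t) * exp (t / 2) = 1 := by rw [← exp_add]; ring_nf; exact exp_zero
  have hexp : exp t = exp (t / 2) * exp (t / 2) := by rw [← exp_add]; ring_nf
  have h2 : 2 ≤ exp (t / 2) * exp (t / 2) := by linarith [add_one_le_exp t]
  rw [hadjicostasKernel, div_le_iff₀ (sub_pos.mpr (one_lt_exp_iff.mpr (by linarith))), hexp]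
  -- `t - 1 + e^{-t} ≤ t ≤ 2 e^{t/2}` and `e^t - 1 ≥ e^t / 2`
  nlinarith [add_one_le_exp (t / 2), exp_pos (-(1 / 2) * t),
    exp_le_one_iff.mpr (by linarith : -t ≤ 0)]

lemma continuousOn_hadjicostasKernel : ContinuousOn hadjicostasKernel (Ioi 0) :=
  ContinuousOn.div (by fun_prop) (by fun_prop) fun _ ht ↦ (sub_pos.mpr (one_lt_exp_iff.mpr ht)).ne'

lemma hadjicostasKernel_isBigO_atTop :
    hadjicostasKernel =O[atTop] fun t ↦ exp (-(1 / 2) * t) :=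
  isBigO_iff.mpr ⟨4, by
    filter_upwards [eventually_ge_atTop 1] with t ht
    rw [norm_of_nonneg (hadjicostasKernel_nonneg (by linarith)), norm_of_nonneg (exp_pos _).le]
    exact hadjicostasKernel_le_exp ht⟩

lemma hadjicostasKernel_isBigO_nhdsGT :
    hadjicostasKernel =O[𝓝[>] 0] fun t ↦ t ^ (-(-1) : ℝ) :=
  isBigO_iff.mpr ⟨1, by
    filter_upwards [Ioc_mem_nhdsGT (zero_lt_one' ℝ)] with t ht
    rw [neg_neg, rpow_one, one_mul, norm_of_nonneg (hadjicostasKernel_nonneg ht.1),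
      norm_of_nonneg ht.1.le]
    exact hadjicostasKernel_le_self ht.1 ht.2⟩

lemma locallyIntegrableOn_ofReal_hadjicostasKernel :
    LocallyIntegrableOn (fun t ↦ (hadjicostasKernel t : ℂ)) (Ioi 0) :=
  (Complex.continuous_ofReal.comp_continuousOn continuousOn_hadjicostasKernel).locallyIntegrableOn
    measurableSet_Ioi

lemma mellinConvergent_hadjicostasKernel {s : ℂ} (hs : -1 < s.re) :
    MellinConvergent (fun t ↦ (hadjicostasKernel t : ℂ)) s :=
  mellinConvergent_of_isBigO_rpow_exp one_half_pos
    locallyIntegrableOn_ofReal_hadjicostasKernel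
    (Complex.isBigO_ofReal_left.mpr hadjicostasKernel_isBigO_atTop)
    (Complex.isBigO_ofReal_left.mpr hadjicostasKernel_isBigO_nhdsGT) hs

lemma differentiableAt_mellin_hadjicostasKernel {s : ℂ} (hs : -1 < s.re) :
    DifferentiableAt ℂ (mellin fun t ↦ (hadjicostasKernel t : ℂ)) s :=
  mellin_differentiableAt_of_isBigO_rpow_exp one_half_pos
    locallyIntegrableOn_ofReal_hadjicostasKernel
    (Complex.isBigO_ofReal_left.mpr hadjicostasKernel_isBigO_atTop)
    (Complex.isBigO_ofReal_left.mpr hadjicostasKernel_isBigO_nhdsGT) hs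

lemma div_exp_sub_one_eq_hadjicostasKernel_add {t : ℝ} (ht : 0 < t) :
    t / (exp t - 1) = hadjicostasKernel t + exp (-t) := by
  have hden : exp t - 1 ≠ 0 := (sub_pos.mpr (one_lt_exp_iff.mpr ht)).ne'
  rw [hadjicostasKernel, exp_neg]
  field_simp
  ring

lemma mellin_hadjicostasKernel_of_re_pos {s : ℂ} (hs : 0 < s.re) :
    mellin (fun t ↦ (hadjicostasKernel t : ℂ)) s
      = Complex.Gamma (s + 1) * (riemannZeta (s + 1) - 1 / s) := by
  have hexp : MellinConvergent (fun t ↦ (exp (-t) : ℂ)) s :=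
    (Complex.GammaIntegral_convergent hs).congr_fun (fun t _ ↦ by rw [smul_eq_mul, mul_comm])
      measurableSet_Ioi
  have hsplit : mellin (fun t ↦ ((t / (exp t - 1) : ℝ) : ℂ)) s
      = mellin (fun t ↦ (hadjicostasKernel t : ℂ)) s + mellin (fun t ↦ (exp (-t) : ℂ)) s := by
    rw [← (hasMellin_add (mellinConvergent_hadjicostasKernel (by linarith)) hexp).2]
    refine setIntegral_congr_fun measurableSet_Ioi fun t ht ↦ ?_
    simp only [div_exp_sub_one_eq_hadjicostasKernel_add ht, Complex.ofReal_add]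
  have hs0 : s ≠ 0 := fun h ↦ by simp [h] at hs
  rw [mellin_div_exp_sub_one hs, ← Complex.GammaIntegral_eq_mellin, ← Complex.Gamma_eq_integral hs,
    Complex.Gamma_add_one s hs0] at hsplit
  rw [Complex.Gamma_add_one s hs0]
  field_simp
  linear_combination -hsplit

lemma mellin_hadjicostasKernel {s : ℂ} (hs : -1 < s.re) (hs0 : s ≠ 0) :
    mellin (fun t ↦ (hadjicostasKernel t : ℂ)) s
      = Complex.Gamma (s + 1) * (riemannZeta (s + 1) - 1 / s) := by
  let U : Set ℂ := {z : ℂ | -1 < z.re} \ {0}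
  have hU : IsOpen U := (isOpen_lt continuous_const Complex.continuous_re).sdiff isClosed_singleton
  have hmellin : AnalyticOnNhd ℂ (mellin fun t ↦ (hadjicostasKernel t : ℂ)) U :=
    DifferentiableOn.analyticOnNhd (fun z hz ↦
      (differentiableAt_mellin_hadjicostasKernel hz.1).differentiableWithinAt) hU
  have hzeta : AnalyticOnNhd ℂ (fun z ↦ Complex.Gamma (z + 1) * (riemannZeta (z + 1) - 1 / z)) U :=
    DifferentiableOn.analyticOnNhd (fun z hz ↦ DifferentiableAt.differentiableWithinAt <|
      (differentiableAt_Gamma_add_one hz.1).mul <|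
        ((differentiableAt_riemannZeta (by simpa using hz.2)).comp z
          (differentiableAt_id.add_const 1)).sub
        ((differentiableAt_const 1).div differentiableAt_id hz.2)) hU
  have h1 : (1 : ℂ) ∈ U := ⟨by simp, one_ne_zero⟩
  have heq : (mellin fun t ↦ (hadjicostasKernel t : ℂ)) =ᶠ[𝓝 1]
      fun z ↦ Complex.Gamma (z + 1) * (riemannZeta (z + 1) - 1 / z) := by
    filter_upwards [(isOpen_lt continuous_const Complex.continuous_re).mem_nhds
      (by simp : (0 : ℝ) < (1 : ℂ).re)] with z hz using mellin_hadjicostasKernel_of_re_pos hz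
  exact hmellin.eqOn_of_preconnected_of_eventuallyEq hzeta
    (isPreconnected_re_gt_diff_singleton (-1) 0) h1 heq ⟨hs, hs0⟩

lemma integrableOn_rpow_mul_hadjicostasKernel {s : ℝ} (hs : -2 < s) :
    IntegrableOn (fun v ↦ v ^ s * hadjicostasKernel v) (Ioi 0) := by
  simpa using mellin_convergent_of_isBigO_scalar (s := s + 1)
    (continuousOn_hadjicostasKernel.locallyIntegrableOn measurableSet_Ioi)
    (hadjicostasKernel_isBigO_atTop.trans (isLittleO_exp_neg_mul_rpow_atTop one_half_pos _).isBigO)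
    (lt_add_one _) hadjicostasKernel_isBigO_nhdsGT (by linarith)

lemma integral_unitSquare_eq_integral_rpow_mul_hadjicostasKernel {s : ℝ} (hs : -2 < s) :
    ∫ x in (0 : ℝ)..1, ∫ y in (0 : ℝ)..1, (1 - x) / (1 - x * y) * (-log (x * y)) ^ s
      = ∫ v in Ioi 0, v ^ s * hadjicostasKernel v := by
  let h : ℝ → ℝ := fun v ↦ v ^ s / (exp v - 1)
  have hpoint (t : ℝ) (ht : 0 < t) (u : ℝ) (hu : 0 < u) :
      exp (-t) * (exp (-u) * ((1 - exp (-t)) / (1 - exp (-t) * exp (-u))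
        * (-log (exp (-t) * exp (-u))) ^ s)) = (1 - exp (-t)) * h (t + u) := by
    have hden : exp (t + u) - 1 ≠ 0 := (sub_pos.mpr (one_lt_exp_iff.mpr (by linarith))).ne'
    have hprod : exp (-t) * exp (-u) = (exp (t + u))⁻¹ := by rw [← exp_add, ← exp_neg, neg_add]
    rw [← mul_assoc, hprod, log_inv, log_exp, neg_neg]
    simp only [h]
    field_simp [(exp_pos (t + u)).ne', hden]
  have hkernel (v : ℝ) (hv : 0 < v) :
      h v * ∫ t in Ioo 0 v, (1 - exp (-t)) = v ^ s * hadjicostasKernel v := by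
    rw [← integral_Ioc_eq_integral_Ioo, ← intervalIntegral.integral_of_le hv.le,
      integral_one_sub_exp_neg, hadjicostasKernel]
    ring
  have hint : IntegrableOn (fun v ↦ ‖h v‖ * ∫ t in Ioo 0 v, ‖1 - exp (-t)‖) (Ioi 0) := by
    refine (integrableOn_rpow_mul_hadjicostasKernel hs).congr_fun (fun v hv ↦ ?_) measurableSet_Ioi
    have hh : 0 ≤ h v := div_nonneg (rpow_nonneg hv.le s) (sub_pos.mpr (one_lt_exp_iff.mpr hv)).le
    dsimp only
    rw [← hkernel v hv, norm_of_nonneg hh]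
    congr 1
    refine setIntegral_congr_fun measurableSet_Ioo fun t ht ↦ (norm_of_nonneg ?_).symm
    linarith [exp_le_one_iff.mpr (neg_nonpos.mpr ht.1.le)]
  calc _ = ∫ t in Ioi 0, (1 - exp (-t)) * ∫ v in Ioi t, h v := by
        simp only [integral_zero_one_eq_integral_Ioi_exp_neg, smul_eq_mul]
        refine setIntegral_congr_fun measurableSet_Ioi fun t ht ↦ ?_
        rw [← integral_const_mul, setIntegral_congr_fun measurableSet_Ioi (hpoint t ht),
          integral_const_mul, integral_comp_add_left_Ioi h 0 t, add_zero]
    _ = ∫ v in Ioi 0, h v * ∫ t in Ioo 0 v, (1 - exp (-t)) :=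
        integral_Ioi_mul_integral_Ioi_swap (by fun_prop) (by fun_prop)
          (fun v ↦ (Continuous.integrableOn_Icc (by fun_prop)).mono_set Ioo_subset_Icc_self) hint
    _ = _ := setIntegral_congr_fun measurableSet_Ioi hkernel

theorem hadjicostas_formula (s : ℝ) (hs : -2 < s) (hs1 : s ≠ -1) :
    (↑(∫ x in (0:ℝ)..1, ∫ y in (0:ℝ)..1,
        ((1 - x) / (1 - x * y)) * (-Real.log (x * y)) ^ s) : ℂ)
      = Complex.Gamma (s + 2) * (riemannZeta (s + 2) - 1 / (s + 1)) := by
  have hre : -1 < ((s + 1 : ℝ) : ℂ).re := by rw [Complex.ofReal_re]; linarith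
  have hne : ((s + 1 : ℝ) : ℂ) ≠ 0 := Complex.ofReal_ne_zero.mpr (by contrapose! hs1; linarith)
  have hmellin := mellin_ofReal hadjicostasKernel (s + 1)
  rw [add_sub_cancel_right, mellin_hadjicostasKernel hre hne] at hmellin
  rw [integral_unitSquare_eq_integral_rpow_mul_hadjicostasKernel hs, ← hmellin]
  push_cast
  ring_nf
end

section
/- For s = 0, the Hadjicostas integral gives ∬_{[0,1]²} (1−x)/(1−xy) dx dy = ζ(2) − 1. -/
/-!
Expanding `(1 - x) / (1 - x y) = ∑ (1 - x) (x y)ⁿ` and integrating term by term (legitimate since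
all terms are nonnegative and the integrals are summable) turns the integral into
`∑ 1 / ((n + 1)² (n + 2))`. The partial fractions `1 / (n + 1)² - (1 / (n + 1) - 1 / (n + 2))`
split this into `ζ(2)` minus a telescoping series with sum `1`.
-/

open MeasureTheory Real Set Interval intervalIntegral

theorem hasSum_intervalIntegral_of_nonneg {μ : Measure ℝ} {a b : ℝ} {f : ℕ → ℝ → ℝ} {F : ℝ → ℝ}
    (hf_int : ∀ n, IntervalIntegrable (f n) μ a b) (hf_nonneg : ∀ n, ∀ x ∈ Ι a b, 0 ≤ f n x)
    (hF : ∀ x ∈ Ι a b, HasSum (fun n ↦ f n x) (F x))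
    (hsum : Summable fun n ↦ ∫ x in a..b, f n x ∂μ) :
    HasSum (fun n ↦ ∫ x in a..b, f n x ∂μ) (∫ x in a..b, F x ∂μ) := by
  have h_norm : ∀ n, ‖∫ x in a..b, f n x ∂μ‖ = ∫ x in Ι a b, ‖f n x‖ ∂μ := fun n ↦ by
    rw [norm_integral_eq_norm_integral_uIoc, Real.norm_of_nonneg
      (setIntegral_nonneg measurableSet_uIoc (hf_nonneg n))]
    exact setIntegral_congr_fun measurableSet_uIoc fun x hx ↦
      (Real.norm_of_nonneg (hf_nonneg n x hx)).symm
  have h_tsum : ∫ x in Ι a b, ∑' n, f n x ∂μ = ∫ x in Ι a b, F x ∂μ :=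
    setIntegral_congr_fun measurableSet_uIoc fun x hx ↦ (hF x hx).tsum_eq
  simp only [intervalIntegral_eq_integral_uIoc, ← h_tsum]
  refine (hasSum_integral_of_summable_integral_norm (fun n ↦ (hf_int n).def') ?_).const_smul _
  simpa only [h_norm] using hsum.norm

theorem hasSum_one_sub_mul_geometric {x y : ℝ} (hx₀ : 0 ≤ x) (hx₁ : x ≤ 1) (hy₀ : 0 ≤ y)
    (hy₁ : y ≤ 1) : HasSum (fun n : ℕ ↦ (1 - x) * (x * y) ^ n) ((1 - x) / (1 - x * y)) := by
  rcases hx₁.eq_or_lt with rfl | hx₁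
  -- for `x = 1` both sides vanish, at `y = 1` through the junk value `0 / 0 = 0`
  · simp [hasSum_zero]
  have hxy : x * y < 1 := (mul_le_of_le_one_right hx₀ hy₁).trans_lt hx₁
  simpa [div_eq_mul_inv] using (hasSum_geometric_of_lt_one (by positivity) hxy).mul_left (1 - x)

theorem hasSum_intervalIntegral_one_sub_div_one_sub_mul {x : ℝ} (hx₀ : 0 ≤ x) (hx₁ : x ≤ 1) :
    HasSum (fun n : ℕ ↦ (1 - x) * x ^ n / (n + 1)) (∫ y in (0 : ℝ)..1, (1 - x) / (1 - x * y)) := by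
  have h_int : ∀ n : ℕ, ∫ y in (0 : ℝ)..1, (1 - x) * (x * y) ^ n = (1 - x) * x ^ n / (n + 1) := by
    intro n
    simp [mul_pow, intervalIntegral.integral_const_mul]
    ring
  have h_geom : Summable fun n : ℕ ↦ (1 - x) * x ^ n := by
    simpa using (hasSum_one_sub_mul_geometric hx₀ hx₁ zero_le_one le_rfl).summable
  have h_nonneg : ∀ n : ℕ, 0 ≤ (1 - x) * x ^ n := fun n ↦
    mul_nonneg (sub_nonneg.2 hx₁) (pow_nonneg hx₀ n)
  have h_le : ∀ n : ℕ, (1 - x) * x ^ n / (n + 1) ≤ (1 - x) * x ^ n := fun n ↦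
    div_le_self (h_nonneg n) (by linarith [n.cast_nonneg (α := ℝ)])
  simp_rw [← h_int]
  refine hasSum_intervalIntegral_of_nonneg
    (fun n ↦ (by fun_prop : Continuous _).intervalIntegrable _ _) ?_ ?_ ?_
  · intro n y hy
    rw [uIoc_of_le zero_le_one] at hy
    exact mul_nonneg (sub_nonneg.2 hx₁) (pow_nonneg (mul_nonneg hx₀ hy.1.le) n)
  · intro y hy
    rw [uIoc_of_le zero_le_one] at hy
    exact hasSum_one_sub_mul_geometric hx₀ hx₁ hy.1.le hy.2
  · simp_rw [h_int]
    exact h_geom.of_nonneg_of_le (fun n ↦ div_nonneg (h_nonneg n) (by positivity)) h_le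

theorem integral_one_sub_mul_pow_div (n : ℕ) :
    ∫ x in (0 : ℝ)..1, (1 - x) * x ^ n / (n + 1) = 1 / ((n + 1) ^ 2 * (n + 2)) := by
  simp [sub_mul, ← pow_succ']
  field_simp
  ring

theorem hasSum_one_div_succ_sub_one_div_succ_succ :
    HasSum (fun n : ℕ ↦ 1 / ((n : ℝ) + 1) - 1 / ((n : ℝ) + 2)) 1 := by
  have h_nonneg : ∀ n : ℕ, 0 ≤ 1 / ((n : ℝ) + 1) - 1 / ((n : ℝ) + 2) := fun n ↦
    sub_nonneg.2 (one_div_le_one_div_of_le (by positivity) (by linarith))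
  rw [hasSum_iff_tendsto_nat_of_nonneg h_nonneg]
  have h_partial : ∀ N : ℕ, ∑ n ∈ Finset.range N, (1 / ((n : ℝ) + 1) - 1 / ((n : ℝ) + 2))
      = 1 - 1 / ((N : ℝ) + 1) := by
    intro N
    have := Finset.sum_range_sub' (fun n : ℕ ↦ 1 / ((n : ℝ) + 1)) N
    push_cast at this
    simpa [add_assoc, one_add_one_eq_two] using this
  simp_rw [h_partial]
  simpa using tendsto_one_div_add_atTop_nhds_zero_nat.const_sub (1 : ℝ)

theorem hasSum_one_div_succ_sq_mul_succ_succ :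
    HasSum (fun n : ℕ ↦ 1 / (((n : ℝ) + 1) ^ 2 * ((n : ℝ) + 2))) (π ^ 2 / 6 - 1) := by
  have h_sq : HasSum (fun n : ℕ ↦ 1 / ((n : ℝ) + 1) ^ 2) (π ^ 2 / 6) := by
    simpa using (hasSum_nat_add_iff' 1).2 hasSum_zeta_two
  refine (h_sq.sub hasSum_one_div_succ_sub_one_div_succ_succ).congr_fun fun n ↦ ?_
  field_simp
  ring

theorem hadjicostas_s_zero :
    (↑(∫ x in (0:ℝ)..1, ∫ y in (0:ℝ)..1, (1 - x) / (1 - x * y)) : ℂ)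
      = riemannZeta 2 - 1 := by
  have h_outer : HasSum (fun n : ℕ ↦ ∫ x in (0 : ℝ)..1, (1 - x) * x ^ n / (n + 1))
      (∫ x in (0 : ℝ)..1, ∫ y in (0 : ℝ)..1, (1 - x) / (1 - x * y)) := by
    refine hasSum_intervalIntegral_of_nonneg
      (fun n ↦ (by fun_prop : Continuous _).intervalIntegrable _ _) ?_ ?_ ?_
    · intro n x hx
      rw [uIoc_of_le zero_le_one] at hx
      exact div_nonneg (mul_nonneg (sub_nonneg.2 hx.2) (pow_nonneg hx.1.le n)) (by positivity)
    · intro x hx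
      rw [uIoc_of_le zero_le_one] at hx
      exact hasSum_intervalIntegral_one_sub_div_one_sub_mul hx.1.le hx.2
    · simpa only [integral_one_sub_mul_pow_div] using hasSum_one_div_succ_sq_mul_succ_succ.summable
  simp only [integral_one_sub_mul_pow_div] at h_outer
  rw [h_outer.unique hasSum_one_div_succ_sq_mul_succ_succ, riemannZeta_two]
  push_cast
  ring
end

section
/- The double integral ∬_{[0,1]²} (−ln(xy))/(1−xy) dx dy equals 2ζ(3) (Beukers). -/
open MeasureTheory Real Set intervalIntegral

-- integrability of x^n * (-log x) on (0,1]
lemma integrableOn_pow_neg_log (n : ℕ) :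
    IntegrableOn (fun x : ℝ => x ^ n * (-Real.log x)) (Set.Ioc 0 1) := by
  have hg : IntegrableOn (fun x : ℝ => 2 * x ^ (-(1/2) : ℝ)) (Set.Ioc 0 1) :=
    ((intervalIntegrable_rpow' (by norm_num)).const_mul 2).1
  refine hg.integrable.mono' ?_ ?_
  · exact ((measurable_id.pow_const n).mul Real.measurable_log.neg).aestronglyMeasurable
  · rw [ae_restrict_iff' measurableSet_Ioc]
    refine ae_of_all _ fun x hx => ?_
    have hx0 : 0 < x := hx.1
    have hlog : Real.log x ≤ 0 := Real.log_nonpos hx0.le hx.2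
    have hxn : x ^ n ≤ 1 := pow_le_one₀ hx0.le hx.2
    have h1 : -Real.log x ≤ 2 * x ^ (-(1/2) : ℝ) := by
      have ht : (0:ℝ) < x ^ (-(1/2) : ℝ) := Real.rpow_pos_of_pos hx0 _
      have := Real.log_le_sub_one_of_pos ht
      rw [Real.log_rpow hx0] at this
      nlinarith
    rw [Real.norm_of_nonneg (by nlinarith [pow_nonneg hx0.le n] : (0:ℝ) ≤ x ^ n * (-Real.log x))]
    nlinarith [pow_nonneg hx0.le n, Real.rpow_pos_of_pos hx0 (-(1/2) : ℝ)]


lemma integral_pow_neg_log (n : ℕ) :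
    ∫ x in Set.Ioc (0:ℝ) 1, x ^ n * (-Real.log x) = 1 / ((n:ℝ)+1)^2 := by
  have hn : ((n:ℝ) + 1) ≠ 0 := by positivity
  set F : ℝ → ℝ := fun x => x ^ (n+1) / ((n:ℝ)+1)^2 - x ^ (n+1) * Real.log x / ((n:ℝ)+1) with hF
  have hFeq : F = fun x : ℝ =>
      x ^ (n+1) / ((n:ℝ)+1)^2 - x ^ n * (x * Real.log x) / ((n:ℝ)+1) := by
    funext x; simp only [hF]; ring
  have hcont : ContinuousOn F (Set.Icc 0 1) := by
    rw [hFeq]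
    exact (((continuous_pow (n+1)).div_const _).sub
      (((continuous_pow n).mul Real.continuous_mul_log).div_const _)).continuousOn
  have hint : IntervalIntegrable (fun x : ℝ => x ^ n * (-Real.log x)) volume 0 1 := by
    rw [intervalIntegrable_iff_integrableOn_Ioc_of_le zero_le_one]
    exact integrableOn_pow_neg_log n
  have hderiv : ∀ x ∈ Set.Ioo (0:ℝ) 1,
      HasDerivWithinAt F (x ^ n * (-Real.log x)) (Set.Ioi x) x := by
    intro x hx
    have h1 : HasDerivAt (fun y : ℝ => y ^ (n+1)) (((n:ℝ)+1) * x ^ n) x := by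
      simpa using hasDerivAt_pow (n+1) x
    have h2 : HasDerivAt Real.log x⁻¹ x := Real.hasDerivAt_log (ne_of_gt hx.1)
    have h3 : HasDerivAt F ((((n:ℝ)+1) * x ^ n) / ((n:ℝ)+1)^2
        - ((((n:ℝ)+1) * x ^ n) * Real.log x + x ^ (n+1) * x⁻¹) / ((n:ℝ)+1)) x :=
      (h1.div_const _).sub ((h1.mul h2).div_const _)
    have hx0 : x ≠ 0 := ne_of_gt hx.1
    have : (((n:ℝ)+1) * x ^ n) / ((n:ℝ)+1)^2
        - ((((n:ℝ)+1) * x ^ n) * Real.log x + x ^ (n+1) * x⁻¹) / ((n:ℝ)+1)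
        = x ^ n * (-Real.log x) := by
      rw [pow_succ]
      field_simp
      ring
    rw [this] at h3
    exact h3.hasDerivWithinAt
  have key := intervalIntegral.integral_eq_sub_of_hasDeriv_right_of_le zero_le_one
    hcont hderiv hint
  rw [← intervalIntegral.integral_of_le zero_le_one, key, hF]
  simp [zero_pow (Nat.succ_ne_zero n)]

lemma integral_pow_unit (n : ℕ) : ∫ x in Set.Ioc (0:ℝ) 1, x ^ n = 1 / ((n:ℝ)+1) := by
  rw [← intervalIntegral.integral_of_le zero_le_one, integral_pow]
  simp [zero_pow (Nat.succ_ne_zero n)]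

lemma integrableOn_pow_unit (n : ℕ) : IntegrableOn (fun x : ℝ => x ^ n) (Set.Ioc 0 1) :=
  (continuous_pow n).integrableOn_Ioc

lemma inner_integral_eq {x : ℝ} (hx : x ∈ Set.Ioo (0:ℝ) 1) :
    ∫ y in (0:ℝ)..1, (-Real.log (x * y)) / (1 - x * y)
      = ∑' n : ℕ, (x ^ n * (-Real.log x) * (1/((n:ℝ)+1)) + x ^ n * (1/((n:ℝ)+1)^2)) := by
  have hx0 : (0:ℝ) < x := hx.1
  have hx1 : x < 1 := hx.2
  have hlx : 0 ≤ -Real.log x := by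
    simpa using neg_nonneg.mpr (Real.log_nonpos hx0.le hx1.le)
  set F : ℕ → ℝ → ℝ := fun n y => x ^ n * (-Real.log x) * y ^ n + x ^ n * (y ^ n * (-Real.log y))
    with hFdef
  have hFint : ∀ n, Integrable (F n) (volume.restrict (Set.Ioc (0:ℝ) 1)) := fun n =>
    ((integrableOn_pow_unit n).const_mul _).add ((integrableOn_pow_neg_log n).const_mul _)
  have hFval : ∀ n, ∫ y in Set.Ioc (0:ℝ) 1, F n y
      = x ^ n * (-Real.log x) * (1/((n:ℝ)+1)) + x ^ n * (1/((n:ℝ)+1)^2) := by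
    intro n
    rw [integral_add ((integrableOn_pow_unit n).const_mul _) ((integrableOn_pow_neg_log n).const_mul _),
      MeasureTheory.integral_const_mul, MeasureTheory.integral_const_mul, integral_pow_unit, integral_pow_neg_log]
  have hFnonneg : ∀ n, ∀ y ∈ Set.Ioc (0:ℝ) 1, 0 ≤ F n y := by
    intro n y hy
    have hly : 0 ≤ -Real.log y := by
      simpa using neg_nonneg.mpr (Real.log_nonpos hy.1.le hy.2)
    have := pow_nonneg hx0.le n
    have := pow_nonneg hy.1.le n
    positivity
  have hFnorm : ∀ n, ∫ y in Set.Ioc (0:ℝ) 1, ‖F n y‖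
      = x ^ n * (-Real.log x) * (1/((n:ℝ)+1)) + x ^ n * (1/((n:ℝ)+1)^2) := by
    intro n
    rw [← hFval n]
    exact setIntegral_congr_fun measurableSet_Ioc fun y hy =>
      Real.norm_of_nonneg (hFnonneg n y hy)
  have hsum : Summable fun n => ∫ y in Set.Ioc (0:ℝ) 1, ‖F n y‖ := by
    simp_rw [hFnorm]
    refine Summable.of_nonneg_of_le (fun n => ?_) (fun n => ?_)
      ((summable_geometric_of_lt_one hx0.le hx1).mul_left ((-Real.log x) + 1))
    · have := pow_nonneg hx0.le n
      positivity
    · have h1 : (1:ℝ)/((n:ℝ)+1) ≤ 1 := by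
        rw [div_le_one (by positivity)]; linarith [Nat.cast_nonneg (α := ℝ) n]
      have h2 : (1:ℝ)/((n:ℝ)+1)^2 ≤ 1 := by
        rw [div_le_one (by positivity)]
        nlinarith [Nat.cast_nonneg (α := ℝ) n]
      have hxn : (0:ℝ) ≤ x ^ n := pow_nonneg hx0.le n
      have a1 : x ^ n * -Real.log x * (1/((n:ℝ)+1)) ≤ x ^ n * -Real.log x :=
        mul_le_of_le_one_right (by positivity) h1
      have a2 : x ^ n * (1/((n:ℝ)+1)^2) ≤ x ^ n * 1 :=
        mul_le_mul_of_nonneg_left h2 hxn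
      nlinarith
  have hpt : ∀ y ∈ Set.Ioc (0:ℝ) 1, (-Real.log (x * y)) / (1 - x * y) = ∑' n, F n y := by
    intro y hy
    have hy0 : (0:ℝ) < y := hy.1
    have hxy0 : 0 < x * y := mul_pos hx0 hy0
    have hxy1 : x * y < 1 :=
      lt_of_le_of_lt (mul_le_of_le_one_right hx0.le hy.2) hx1
    have : ∑' n, F n y = ∑' n : ℕ, (-Real.log (x*y)) * (x*y) ^ n := by
      refine tsum_congr fun n => ?_
      rw [Real.log_mul (ne_of_gt hx0) (ne_of_gt hy0), mul_pow]
      simp only [hFdef]; ring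
    rw [this, tsum_mul_left, tsum_geometric_of_lt_one hxy0.le hxy1, div_eq_mul_inv]
  rw [intervalIntegral.integral_of_le zero_le_one,
    setIntegral_congr_fun measurableSet_Ioc hpt,
    ← integral_tsum_of_summable_integral_norm hFint hsum]
  exact tsum_congr hFval

lemma summable_cubes : Summable (fun n : ℕ => 2 / ((n:ℝ)+1)^3) := by
  have h := Real.summable_one_div_nat_pow.mpr (show 1 < 3 by norm_num)
  have h2 := (summable_nat_add_iff 1).mpr h
  have h3 : Summable (fun n : ℕ => 1 / ((n:ℝ)+1)^3) := by
    refine h2.congr fun n => ?_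
    push_cast; ring
  simpa [div_eq_mul_inv, mul_comm] using h3.mul_left 2

theorem beukers_zeta_three :
    (↑(∫ x in (0:ℝ)..1, ∫ y in (0:ℝ)..1, (-Real.log (x * y)) / (1 - x * y)) : ℂ)
      = 2 * riemannZeta 3 := by
  set G : ℕ → ℝ → ℝ := fun n x =>
    x ^ n * (-Real.log x) * (1/((n:ℝ)+1)) + x ^ n * (1/((n:ℝ)+1)^2) with hGdef
  have hGint : ∀ n, IntegrableOn (G n) (Set.Ioo (0:ℝ) 1) volume := by
    intro n
    have h : IntegrableOn (G n) (Set.Ioc (0:ℝ) 1) volume :=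
      ((integrableOn_pow_neg_log n).mul_const _).add ((integrableOn_pow_unit n).mul_const _)
    exact h.mono_set Set.Ioo_subset_Ioc_self
  have hGval : ∀ n, ∫ x in Set.Ioo (0:ℝ) 1, G n x = 2 / ((n:ℝ)+1)^3 := by
    intro n
    rw [← MeasureTheory.integral_Ioc_eq_integral_Ioo]
    rw [integral_add ((integrableOn_pow_neg_log n).mul_const _)
      ((integrableOn_pow_unit n).mul_const _),
      MeasureTheory.integral_mul_const, MeasureTheory.integral_mul_const,
      integral_pow_neg_log, integral_pow_unit]
    have hn : ((n:ℝ)+1) ≠ 0 := by positivity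
    field_simp
    ring
  have hGnonneg : ∀ n, ∀ x ∈ Set.Ioo (0:ℝ) 1, 0 ≤ G n x := by
    intro n x hx
    have hlx : 0 ≤ -Real.log x := by
      simpa using neg_nonneg.mpr (Real.log_nonpos hx.1.le hx.2.le)
    have := pow_nonneg hx.1.le n
    positivity
  have hGnorm : ∀ n, ∫ x in Set.Ioo (0:ℝ) 1, ‖G n x‖ = 2 / ((n:ℝ)+1)^3 := by
    intro n
    rw [← hGval n]
    exact setIntegral_congr_fun measurableSet_Ioo fun x hx =>
      Real.norm_of_nonneg (hGnonneg n x hx)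
  have hGsum : Summable fun n => ∫ x in Set.Ioo (0:ℝ) 1, ‖G n x‖ := by
    simp_rw [hGnorm]; exact summable_cubes
  have hreal : (∫ x in (0:ℝ)..1, ∫ y in (0:ℝ)..1, (-Real.log (x * y)) / (1 - x * y))
      = ∑' n : ℕ, 2 / ((n:ℝ)+1)^3 := by
    rw [intervalIntegral.integral_of_le zero_le_one,
      MeasureTheory.integral_Ioc_eq_integral_Ioo,
      setIntegral_congr_fun measurableSet_Ioo (fun x hx => inner_integral_eq hx),
      ← integral_tsum_of_summable_integral_norm hGint hGsum]
    exact tsum_congr hGval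
  have hz : riemannZeta 3 = ∑' n : ℕ, 1 / ((n:ℂ)+1)^3 := by
    rw [zeta_eq_tsum_one_div_nat_add_one_cpow (by norm_num)]
    refine tsum_congr fun n => ?_
    rw [show (3:ℂ) = ((3:ℕ):ℂ) by norm_num, Complex.cpow_natCast]
  rw [hreal, Complex.ofReal_tsum, hz, ← tsum_mul_left]
  refine tsum_congr fun n => ?_
  push_cast
  ring
end
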